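/- arXiv:1108.1700 — 4 statements merged into one kernel-verified Lean document; each statement's English description precedes it below -/
import Mathlib

section
/- Let k be a field, R a commutative k-algebra, K an ideal of R, f ∈ R, and n ≥ 1 with f^n ∈ K. Suppose h_1, …, h_r ∈ R are elements whose residues span the quotient R/(K + (f)) as a k-vector space. Then the residues of the finite family {h_i · f^j : 1 ≤ i ≤ r, 0 ≤ j ≤ n − 1} span R/K as a k-vector space. -/
/-- If `f ^ n ∈ K` (with `n ≥ 1`) and the residues of `h 1, …, h r` span
`R ⧸ (K + (f))` over `k`, then the residues of the family
`{h i * f ^ j : 1 ≤ i ≤ r, 0 ≤ j ≤ n - 1}` span `R ⧸ K` over `k`. -/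
theorem span_quotient_of_pow_mem
    (k : Type*) [Field k] (R : Type*) [CommRing R] [Algebra k R]
    (K : Ideal R) (f : R) (n : ℕ) (hn : 1 ≤ n) (hf : f ^ n ∈ K)
    (r : ℕ) (h : Fin r → R)
    (hspan : Submodule.span k
        (Set.range fun i : Fin r => Ideal.Quotient.mk (K ⊔ Ideal.span {f}) (h i)) = ⊤) :
    Submodule.span k
        (Set.range fun p : Fin r × Fin n =>
          Ideal.Quotient.mk K (h p.1 * f ^ (p.2 : ℕ))) = ⊤ := by
  set T := Submodule.span k
      (Set.range fun p : Fin r × Fin n => Ideal.Quotient.mk K (h p.1 * f ^ (p.2 : ℕ))) with hT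
  have hbase : ∀ (i : Fin r) (e : ℕ), e < n → Ideal.Quotient.mk K (h i * f ^ e) ∈ T := by
    intro i e he
    exact Submodule.subset_span ⟨(i, ⟨e, he⟩), rfl⟩
  have hmk : ∀ (I : Ideal R) (c : k) (a : R),
      Ideal.Quotient.mk I (c • a) = c • Ideal.Quotient.mk I a := fun I c a => by
    rw [← Ideal.Quotient.mkₐ_eq_mk k, map_smul]
  have key : ∀ j : ℕ, j ≤ n → ∀ x : R, Ideal.Quotient.mk K (x * f ^ (n - j)) ∈ T := by
    intro j
    induction j with
    | zero =>
      intro _ x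
      simp only [Nat.sub_zero]
      have : x * f ^ n ∈ K := Ideal.mul_mem_left K x hf
      rw [Ideal.Quotient.eq_zero_iff_mem.mpr this]
      exact T.zero_mem
    | succ j ih =>
      intro hj x
      have hj' : j ≤ n := Nat.le_of_succ_le hj
      have he : n - (j + 1) < n := Nat.sub_lt (lt_of_lt_of_le (Nat.lt_of_lt_of_le Nat.zero_lt_one hn) le_rfl) (Nat.succ_pos j)
      set e := n - (j + 1) with hedef
      have hee : e + 1 = n - j := by omega
      -- decompose x
      have hx : Ideal.Quotient.mk (K ⊔ Ideal.span {f}) x ∈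
          Submodule.span k (Set.range fun i : Fin r =>
            Ideal.Quotient.mk (K ⊔ Ideal.span {f}) (h i)) := by
        rw [hspan]; trivial
      obtain ⟨c, hc⟩ := (Submodule.mem_span_range_iff_exists_fun k).mp hx
      have hsum : Ideal.Quotient.mk (K ⊔ Ideal.span {f}) (∑ i, c i • h i) =
          Ideal.Quotient.mk (K ⊔ Ideal.span {f}) x := by
        rw [← hc, map_sum]
        exact Finset.sum_congr rfl fun i _ => hmk _ _ _
      have hmem : x - ∑ i, c i • h i ∈ K ⊔ Ideal.span {f} :=
        Ideal.Quotient.eq.mp hsum.symm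
      rw [Submodule.mem_sup] at hmem
      obtain ⟨κ, hκ, z, hz, hkz⟩ := hmem
      obtain ⟨g, hg⟩ := Ideal.mem_span_singleton'.mp hz
      -- x = ∑ c i • h i + κ + g * f
      have hxeq : x = (∑ i, c i • h i) + κ + g * f := by
        rw [hg]; linear_combination -hkz
      have hs : (∑ i, c i • h i) * f ^ e = ∑ i, c i • (h i * f ^ e) := by
        rw [Finset.sum_mul]
        exact Finset.sum_congr rfl fun i _ => smul_mul_assoc _ _ _
      have : x * f ^ e = (∑ i, c i • (h i * f ^ e)) + κ * f ^ e + g * f ^ (n - j) := by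
        rw [hxeq, ← hee, add_mul, add_mul, hs]
        ring
      rw [this]
      have h1 : Ideal.Quotient.mk K ((∑ i, c i • (h i * f ^ e)) + κ * f ^ e + g * f ^ (n - j))
          = (∑ i, c i • Ideal.Quotient.mk K (h i * f ^ e)) + Ideal.Quotient.mk K (g * f ^ (n - j)) := by
        have hκ0 : Ideal.Quotient.mk K (κ * f ^ e) = 0 :=
          Ideal.Quotient.eq_zero_iff_mem.mpr (Ideal.mul_mem_right _ _ hκ)
        rw [map_add, map_add, map_sum, hκ0, add_zero]
        simp only [hmk]
      rw [h1]
      exact T.add_mem (T.sum_mem fun i _ => T.smul_mem _ (hbase i e he)) (ih hj' g)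
  rw [eq_top_iff]
  rintro y -
  obtain ⟨x, rfl⟩ := Ideal.Quotient.mk_surjective y
  have := key n le_rfl x
  simpa using this
end

section
/- Let k be a field, m ≥ 1, and let R = k[x_1, …, x_m] be the polynomial ring in m variables. Let K and K' be ideals of R with K^n ⊆ K' for some n ≥ 1, and suppose R/K is a finite-dimensional k-vector space. Then R/K' is finite-dimensional over k and dim_k R/K' ≤ n^m · dim_k R/K. -/
namespace MultAux
open MvPolynomial

variable {σ : Type*} {k : Type*} [Field k] (mo : MonomialOrder σ)

/-- The synonym-valued degree of a polynomial: sup of `toSyn` over the support. -/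
noncomputable def deg (p : MvPolynomial σ k) : mo.syn := p.support.sup mo.toSyn

/-- The leading exponent of a polynomial. -/
noncomputable def lead (p : MvPolynomial σ k) : σ →₀ ℕ := mo.toSyn.symm (deg mo p)

variable {mo}

lemma toSyn_lead (p : MvPolynomial σ k) : mo.toSyn (lead mo p) = deg mo p := by
  simp [lead]

lemma lead_mem_support {p : MvPolynomial σ k} (hp : p ≠ 0) : lead mo p ∈ p.support := by
  obtain ⟨a, ha, hsup⟩ := Finset.exists_mem_eq_sup p.support
    (by simpa using hp) mo.toSyn
  have : lead mo p = a := by simp [lead, deg, hsup]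
  rwa [this]

lemma coeff_lead_ne_zero {p : MvPolynomial σ k} (hp : p ≠ 0) :
    coeff (lead mo p) p ≠ 0 := by
  simpa [MvPolynomial.mem_support_iff] using lead_mem_support (mo := mo) hp

lemma toSyn_le_lead {p : MvPolynomial σ k} {b : σ →₀ ℕ} (hb : b ∈ p.support) :
    mo.toSyn b ≤ mo.toSyn (lead mo p) := by
  rw [toSyn_lead]; exact Finset.le_sup hb

lemma lead_eq_of {p : MvPolynomial σ k} {a : σ →₀ ℕ} (ha : a ∈ p.support)
    (h : ∀ b ∈ p.support, mo.toSyn b ≤ mo.toSyn a) : lead mo p = a := by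
  have h1 : mo.toSyn (lead mo p) ≤ mo.toSyn a :=
    h _ (lead_mem_support (by rintro rfl; simp at ha))
  exact mo.toSyn.injective (le_antisymm h1 (toSyn_le_lead ha))

lemma lead_monomial {a : σ →₀ ℕ} {c : k} (hc : c ≠ 0) :
    lead mo (monomial a c) = a := by
  classical
  apply lead_eq_of
  · rw [MvPolynomial.support_monomial, if_neg hc]; exact Finset.mem_singleton_self a
  · intro b hb
    rw [MvPolynomial.support_monomial, if_neg hc, Finset.mem_singleton] at hb
    rw [hb]

lemma coeff_lead_mul (p q : MvPolynomial σ k) (hp : p ≠ 0) (hq : q ≠ 0) :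
    coeff (lead mo p + lead mo q) (p * q) = coeff (lead mo p) p * coeff (lead mo q) q := by
  classical
  rw [MvPolynomial.coeff_mul]
  show _ = (fun x : (σ →₀ ℕ) × (σ →₀ ℕ) => coeff x.1 p * coeff x.2 q) (lead mo p, lead mo q)
  apply Finset.sum_eq_single_of_mem
  · exact Finset.HasAntidiagonal.mem_antidiagonal.mpr rfl
  · rintro ⟨a, b⟩ hab hne
    rw [Finset.HasAntidiagonal.mem_antidiagonal] at hab
    by_contra h
    have ha : a ∈ p.support := by
      rw [MvPolynomial.mem_support_iff]; intro h0; apply h; rw [h0, zero_mul]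
    have hb : b ∈ q.support := by
      rw [MvPolynomial.mem_support_iff]; intro h0; apply h; rw [h0, mul_zero]
    have h1 := toSyn_le_lead (mo := mo) ha
    have h2 := toSyn_le_lead (mo := mo) hb
    have hsum : mo.toSyn a + mo.toSyn b = mo.toSyn (lead mo p) + mo.toSyn (lead mo q) := by
      rw [← map_add, ← map_add, hab]
    have hea : mo.toSyn a = mo.toSyn (lead mo p) := le_antisymm h1 (by
      by_contra hlt
      have := add_lt_add_of_lt_of_le (lt_of_not_ge hlt) h2
      rw [hsum] at this; exact lt_irrefl _ this)
    have heb : mo.toSyn b = mo.toSyn (lead mo q) := by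
      have := hsum; rw [hea] at this; exact add_left_cancel this
    exact hne (Prod.ext (mo.toSyn.injective hea) (mo.toSyn.injective heb))

lemma mul_ne_zero' {p q : MvPolynomial σ k} (hp : p ≠ 0) (hq : q ≠ 0) : p * q ≠ 0 :=
  mul_ne_zero hp hq

lemma lead_mul {p q : MvPolynomial σ k} (hp : p ≠ 0) (hq : q ≠ 0) :
    lead mo (p * q) = lead mo p + lead mo q := by
  apply lead_eq_of
  · rw [MvPolynomial.mem_support_iff, coeff_lead_mul p q hp hq]
    exact mul_ne_zero (coeff_lead_ne_zero hp) (coeff_lead_ne_zero hq)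
  · intro c hc
    classical
    rw [MvPolynomial.mem_support_iff, MvPolynomial.coeff_mul] at hc
    obtain ⟨⟨a, b⟩, hab, hne⟩ := Finset.exists_ne_zero_of_sum_ne_zero hc
    rw [Finset.HasAntidiagonal.mem_antidiagonal] at hab
    have ha : a ∈ p.support := by
      rw [MvPolynomial.mem_support_iff]; intro h0; apply hne; rw [h0, zero_mul]
    have hb : b ∈ q.support := by
      rw [MvPolynomial.mem_support_iff]; intro h0; apply hne; rw [h0, mul_zero]
    calc mo.toSyn c = mo.toSyn a + mo.toSyn b := by rw [← map_add, hab]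
    _ ≤ mo.toSyn (lead mo p) + mo.toSyn (lead mo q) :=
        add_le_add (toSyn_le_lead ha) (toSyn_le_lead hb)
    _ = mo.toSyn (lead mo p + lead mo q) := (map_add _ _ _).symm


variable (mo) in
/-- The set of leading exponents of nonzero elements of an ideal. -/
def leadSet (K : Ideal (MvPolynomial σ k)) : Set (σ →₀ ℕ) :=
  {a | ∃ p ∈ K, p ≠ 0 ∧ lead mo p = a}

lemma leadSet_add_mem {K : Ideal (MvPolynomial σ k)} {a : σ →₀ ℕ}
    (ha : a ∈ leadSet mo K) (b : σ →₀ ℕ) : b + a ∈ leadSet mo K := by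
  obtain ⟨p, hpK, hp0, hpl⟩ := ha
  refine ⟨monomial b 1 * p, Ideal.mul_mem_left _ _ hpK,
    mul_ne_zero (by simp [MvPolynomial.monomial_eq_zero]) hp0, ?_⟩
  rw [lead_mul (by simp [MvPolynomial.monomial_eq_zero]) hp0,
    lead_monomial (one_ne_zero), hpl]

lemma leadSet_mul {K K' : Ideal (MvPolynomial σ k)} {a b : σ →₀ ℕ}
    (ha : a ∈ leadSet mo K) (hb : b ∈ leadSet mo K') : a + b ∈ leadSet mo (K * K') := by
  obtain ⟨p, hpK, hp0, hpl⟩ := ha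
  obtain ⟨q, hqK, hq0, hql⟩ := hb
  exact ⟨p * q, Ideal.mul_mem_mul hpK hqK, mul_ne_zero hp0 hq0,
    by rw [lead_mul hp0 hq0, hpl, hql]⟩

lemma leadSet_pow {K : Ideal (MvPolynomial σ k)} {a : σ →₀ ℕ}
    (ha : a ∈ leadSet mo K) {n : ℕ} (hn : 1 ≤ n) : n • a ∈ leadSet mo (K ^ n) := by
  induction n with
  | zero => omega
  | succ n ih =>
    rcases Nat.eq_zero_or_pos n with rfl | hn'
    · simpa using ha
    · have := leadSet_mul (ih hn') ha
      rw [succ_nsmul, pow_succ]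
      exact this

lemma support_subset_of_mem_span {C : Set (σ →₀ ℕ)} {p : MvPolynomial σ k}
    (hp : p ∈ Submodule.span k (Set.range fun a : C => (monomial a.1 (1 : k)))) :
    (p.support : Set (σ →₀ ℕ)) ⊆ C := by
  classical
  induction hp using Submodule.span_induction with
  | mem x h =>
    obtain ⟨a, rfl⟩ := h
    intro b hb
    rw [Finset.mem_coe, MvPolynomial.support_monomial, if_neg one_ne_zero,
      Finset.mem_singleton] at hb
    rw [hb]; exact a.2
  | zero => simp
  | add x y hx hy ihx ihy =>
    refine subset_trans (Finset.coe_subset.mpr MvPolynomial.support_add) ?_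
    rw [Finset.coe_union]
    exact Set.union_subset ihx ihy
  | smul a x hx ihx =>
    exact subset_trans (Finset.coe_subset.mpr MvPolynomial.support_smul) ihx

/-- The "standard monomials" are monomials whose exponent is not a leading exponent. -/
lemma linearIndependent_std (K : Ideal (MvPolynomial σ k)) :
    LinearIndependent k fun a : ((leadSet mo K)ᶜ : Set (σ →₀ ℕ)) =>
      Ideal.Quotient.mk K (monomial a.1 (1 : k)) := by
  have hb : LinearIndependent k fun a : ((leadSet mo K)ᶜ : Set (σ →₀ ℕ)) =>
      (monomial a.1 (1 : k) : MvPolynomial σ k) := by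
    have := (MvPolynomial.basisMonomials σ k).linearIndependent
    rw [MvPolynomial.coe_basisMonomials] at this
    exact this.comp _ Subtype.coe_injective
  have hmap := hb.map (f := (Ideal.Quotient.mkₐ k K).toLinearMap) ?_
  · exact hmap
  · rw [Submodule.disjoint_def]
    intro p hsp hker
    have hpK : p ∈ K := by
      have : Ideal.Quotient.mk K p = 0 := hker
      rwa [Ideal.Quotient.eq_zero_iff_mem] at this
    by_contra hp0
    -- support of p is contained in (leadSet mo K)ᶜ
    have hsupp : (p.support : Set (σ →₀ ℕ)) ⊆ (leadSet mo K)ᶜ :=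
      support_subset_of_mem_span hsp
    have : lead mo p ∈ (leadSet mo K)ᶜ := hsupp (lead_mem_support hp0)
    exact this ⟨p, hpK, hp0, rfl⟩


lemma deg_lt_of {q : MvPolynomial σ k} (hq : q ≠ 0) {t : mo.syn}
    (h : ∀ b ∈ q.support, mo.toSyn b < t) : deg mo q < t := by
  have hne : q.support.Nonempty := by
    rw [Finset.nonempty_iff_ne_empty]
    simpa [MvPolynomial.support_eq_empty] using hq
  obtain ⟨b, hb⟩ := hne
  exact (Finset.sup_lt_iff (lt_of_le_of_lt bot_le (h b hb))).mpr h

lemma mk_mem_span_std (K : Ideal (MvPolynomial σ k)) (p : MvPolynomial σ k) :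
    Ideal.Quotient.mk K p ∈ Submodule.span k
      (Set.range fun a : ((leadSet mo K)ᶜ : Set (σ →₀ ℕ)) =>
        Ideal.Quotient.mk K (monomial a.1 (1 : k))) := by
  classical
  set SP := Submodule.span k
      (Set.range fun a : ((leadSet mo K)ᶜ : Set (σ →₀ ℕ)) =>
        Ideal.Quotient.mk K (monomial a.1 (1 : k))) with hSP
  suffices H : ∀ s : mo.syn, ∀ p : MvPolynomial σ k, deg mo p = s →
      Ideal.Quotient.mk K p ∈ SP from H _ p rfl
  intro s
  induction s using WellFoundedLT.induction with
  | _ s IH =>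
  intro p hdeg
  by_cases hp0 : p = 0
  · rw [hp0, map_zero]; exact Submodule.zero_mem SP
  set a := lead mo p with ha_def
  set c := coeff a p with hc_def
  have hc : c ≠ 0 := coeff_lead_ne_zero hp0
  have hsa : mo.toSyn a = s := by rw [← hdeg, toSyn_lead]
  by_cases ha : a ∈ leadSet mo K
  · -- reduce modulo an element of K
    obtain ⟨g, hgK, hg0, hgl⟩ := ha
    have hd : coeff a g ≠ 0 := by
      rw [← hgl]; exact coeff_lead_ne_zero hg0
    set q := p - (c / coeff a g) • g with hq_def
    have hmk : Ideal.Quotient.mk K p = Ideal.Quotient.mk K q := by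
      rw [Ideal.Quotient.eq]
      have : p - q = (c / coeff a g) • g := by rw [hq_def]; exact sub_sub_cancel p _
      rw [this, MvPolynomial.smul_eq_C_mul]
      exact Ideal.mul_mem_left _ _ hgK
    have hqa : coeff a q = 0 := by
      rw [hq_def, MvPolynomial.coeff_sub, MvPolynomial.coeff_smul, smul_eq_mul,
        div_mul_cancel₀ _ hd, ← hc_def, sub_self]
    have hqlt : ∀ b ∈ q.support, mo.toSyn b < s := by
      intro b hb
      rw [MvPolynomial.mem_support_iff] at hb
      have hba : b ≠ a := by rintro rfl; exact hb hqa
      have hble : mo.toSyn b ≤ mo.toSyn a := by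
        rcases (by
          by_contra hcon
          push_neg at hcon
          apply hb
          rw [hq_def, MvPolynomial.coeff_sub, MvPolynomial.coeff_smul, hcon.1, hcon.2,
            smul_eq_mul, mul_zero, sub_zero] : coeff b p ≠ 0 ∨ coeff b g ≠ 0) with h | h
        · exact toSyn_le_lead (MvPolynomial.mem_support_iff.mpr h)
        · rw [← hgl]; exact toSyn_le_lead (MvPolynomial.mem_support_iff.mpr h)
      rw [hsa] at hble
      exact lt_of_le_of_ne hble (fun he => hba (mo.toSyn.injective (by rw [he, hsa])))
    rw [hmk]
    by_cases hq0 : q = 0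
    · rw [hq0, map_zero]; exact Submodule.zero_mem SP
    · exact IH _ (deg_lt_of hq0 hqlt) q rfl
  · -- the leading monomial is standard
    set q := p - monomial a c with hq_def
    have hsplit : Ideal.Quotient.mk K p
        = Ideal.Quotient.mk K q + c • Ideal.Quotient.mk K (monomial a (1 : k)) := by
      have h1 : p = q + c • monomial a (1 : k) := by
        rw [MvPolynomial.smul_monomial, smul_eq_mul, mul_one, hq_def]; abel
      calc Ideal.Quotient.mk K p
          = (Ideal.Quotient.mkₐ k K).toLinearMap (q + c • monomial a (1 : k)) := by
            rw [← h1]; simp [Ideal.Quotient.mkₐ_eq_mk]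
        _ = _ := by
            rw [map_add, map_smul]; simp [Ideal.Quotient.mkₐ_eq_mk]
    have hqa : coeff a q = 0 := by
      rw [hq_def, MvPolynomial.coeff_sub, MvPolynomial.coeff_monomial, if_pos rfl,
        ← hc_def, sub_self]
    have hqlt : ∀ b ∈ q.support, mo.toSyn b < s := by
      intro b hb
      rw [MvPolynomial.mem_support_iff] at hb
      have hba : b ≠ a := by rintro rfl; exact hb hqa
      have hbp : coeff b p ≠ 0 := by
        rw [hq_def, MvPolynomial.coeff_sub, MvPolynomial.coeff_monomial,
          if_neg (show ¬ a = b from fun h => hba h.symm), sub_zero] at hb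
        exact hb
      have hble := toSyn_le_lead (mo := mo) (MvPolynomial.mem_support_iff.mpr hbp)
      rw [← ha_def, hsa] at hble
      exact lt_of_le_of_ne hble (fun he => hba (mo.toSyn.injective (by rw [he, hsa])))
    have hmono : Ideal.Quotient.mk K (monomial a (1 : k)) ∈ SP :=
      Submodule.subset_span ⟨⟨a, ha⟩, rfl⟩
    rw [hsplit]
    refine Submodule.add_mem SP ?_ (Submodule.smul_mem SP c hmono)
    by_cases hq0 : q = 0
    · rw [hq0, map_zero]; exact Submodule.zero_mem SP
    · exact IH _ (deg_lt_of hq0 hqlt) q rfl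


noncomputable def stdBasis (K : Ideal (MvPolynomial σ k)) :
    Module.Basis ((leadSet mo K)ᶜ : Set (σ →₀ ℕ)) k (MvPolynomial σ k ⧸ K) :=
  Module.Basis.mk (linearIndependent_std (mo := mo) K) (by
    rintro x -
    obtain ⟨p, rfl⟩ := Ideal.Quotient.mk_surjective x
    exact mk_mem_span_std K p)

lemma compl_finite_of_findim (K : Ideal (MvPolynomial σ k))
    (hfin : FiniteDimensional k (MvPolynomial σ k ⧸ K)) :
    ((leadSet mo K)ᶜ : Set (σ →₀ ℕ)).Finite := by
  have := (linearIndependent_std (mo := mo) K).finite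
  exact Set.finite_coe_iff.mp this

lemma findim_of_compl_finite (K : Ideal (MvPolynomial σ k))
    (h : ((leadSet mo K)ᶜ : Set (σ →₀ ℕ)).Finite) :
    FiniteDimensional k (MvPolynomial σ k ⧸ K) := by
  haveI := h.to_subtype
  exact Module.Finite.of_basis (stdBasis (mo := mo) K)

lemma finrank_eq_card_compl (K : Ideal (MvPolynomial σ k))
    (h : ((leadSet mo K)ᶜ : Set (σ →₀ ℕ)).Finite) :
    Module.finrank k (MvPolynomial σ k ⧸ K) = h.toFinset.card := by
  haveI := h.fintype
  rw [Module.finrank_eq_card_basis (stdBasis (mo := mo) K), Set.Finite.card_toFinset]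

end MultAux

open MvPolynomial MultAux in
/-- Let `R = k[x₁, …, xₘ]` with `m ≥ 1`, and let `K, K'` be ideals of `R` with
`K ^ n ⊆ K'` for some `n ≥ 1`. If `R ⧸ K` is finite-dimensional over `k`, then
so is `R ⧸ K'`, and `dim_k R⧸K' ≤ n ^ m * dim_k R⧸K`. -/
theorem mult_le_pow_mul_mult_of_pow_le_mvPolynomial
    (k : Type*) [Field k] (m : ℕ) (hm : 1 ≤ m)
    (K K' : Ideal (MvPolynomial (Fin m) k)) (n : ℕ) (hn : 1 ≤ n)
    (hKK' : K ^ n ≤ K')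
    (hfin : FiniteDimensional k (MvPolynomial (Fin m) k ⧸ K)) :
    FiniteDimensional k (MvPolynomial (Fin m) k ⧸ K') ∧
      Module.finrank k (MvPolynomial (Fin m) k ⧸ K') ≤
        n ^ m * Module.finrank k (MvPolynomial (Fin m) k ⧸ K) := by
  classical
  have hnpos : 0 < n := hn
  set mo : MonomialOrder (Fin m) := MonomialOrder.lex with hmo
  set S : Set (Fin m →₀ ℕ) := leadSet mo K with hS
  set S' : Set (Fin m →₀ ℕ) := leadSet mo K' with hS'
  -- the floor-division map on exponents
  set φ : (Fin m →₀ ℕ) → (Fin m →₀ ℕ) :=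
    fun a => Finsupp.mapRange (· / n) (Nat.zero_div n) a with hφ
  have hφ_apply : ∀ (a : Fin m →₀ ℕ) (i : Fin m), φ a i = a i / n := by
    intro a i; simp [hφ, Finsupp.mapRange_apply]
  -- key : if `φ a` is a leading exponent for `K`, then `a` is one for `K'`
  have key : ∀ a : Fin m →₀ ℕ, φ a ∈ S → a ∈ S' := by
    intro a hφa
    have h1 : n • (φ a) ∈ leadSet mo (K ^ n) := leadSet_pow (mo := mo) hφa hn
    have h2 : n • (φ a) ∈ S' := by
      obtain ⟨p, hpK, hp0, hpl⟩ := h1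
      exact ⟨p, hKK' hpK, hp0, hpl⟩
    have hle : n • (φ a) ≤ a := by
      intro i
      rw [Finsupp.smul_apply, hφ_apply, smul_eq_mul, mul_comm]
      exact Nat.div_mul_le_self (a i) n
    have := leadSet_add_mem (mo := mo) h2 (a - n • (φ a))
    rwa [tsub_add_cancel_of_le hle] at this
  -- the complement for K is finite
  have hC : (Sᶜ : Set (Fin m →₀ ℕ)).Finite := compl_finite_of_findim K hfin
  -- fibers of φ are finite
  have hfiber : ∀ b : Fin m →₀ ℕ, {a : Fin m →₀ ℕ | φ a = b}.Finite := by
    intro b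
    rw [← Set.finite_coe_iff]
    apply Finite.of_injective (f := fun a : {a : Fin m →₀ ℕ | φ a = b} =>
      fun i : Fin m => (⟨a.1 i % n, Nat.mod_lt _ hnpos⟩ : Fin n))
    intro a a' hEq
    have ha : ∀ i, a.1 i = n * b i + a.1 i % n := by
      intro i
      have h1 : a.1 i / n = b i := by rw [← hφ_apply a.1 i, a.2]
      conv_lhs => rw [← Nat.div_add_mod (a.1 i) n]
      rw [h1]
    have ha' : ∀ i, a'.1 i = n * b i + a'.1 i % n := by
      intro i
      have h1 : a'.1 i / n = b i := by rw [← hφ_apply a'.1 i, a'.2]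
      conv_lhs => rw [← Nat.div_add_mod (a'.1 i) n]
      rw [h1]
    apply Subtype.ext
    ext i
    have := congrFun hEq i
    rw [Fin.mk.injEq] at this
    rw [ha i, ha' i, this]
  -- the complement for K' is finite
  have hsub : (S'ᶜ : Set (Fin m →₀ ℕ)) ⊆ ⋃ b ∈ Sᶜ, {a | φ a = b} := by
    intro a ha
    have : φ a ∈ Sᶜ := fun h => ha (key a h)
    exact Set.mem_biUnion this rfl
  have hC' : (S'ᶜ : Set (Fin m →₀ ℕ)).Finite :=
    Set.Finite.subset (Set.Finite.biUnion hC (fun b _ => hfiber b)) hsub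
  -- counting
  refine ⟨findim_of_compl_finite K' hC', ?_⟩
  rw [finrank_eq_card_compl K hC, finrank_eq_card_compl K' hC']
  -- reconstruction of an exponent from its floor quotient and remainders
  have recon : ∀ (b a : Fin m →₀ ℕ), φ a = b → ∀ i, a i = n * b i + a i % n := by
    intro b a hab i
    have h1 : a i / n = b i := by rw [← hφ_apply a i, hab]
    conv_lhs => rw [← Nat.div_add_mod (a i) n]
    rw [h1]
  have himg : hC'.toFinset.image φ ⊆ hC.toFinset := by
    intro b hb
    rw [Finset.mem_image] at hb
    obtain ⟨a, ha, rfl⟩ := hb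
    rw [Set.Finite.mem_toFinset] at ha ⊢
    exact fun h => ha (key a h)
  have h1 : hC'.toFinset.card ≤ n ^ m * (hC'.toFinset.image φ).card := by
    apply Finset.card_le_mul_card_image
    intro b _
    calc (Finset.filter (fun a => φ a = b) hC'.toFinset).card
        ≤ (Finset.univ : Finset (Fin m → Fin n)).card := by
          apply Finset.card_le_card_of_injOn
            (fun a => fun i : Fin m => (⟨a i % n, Nat.mod_lt _ hnpos⟩ : Fin n))
            (fun _ _ => Finset.mem_univ _)
          intro a ha a' ha' hEq
          rw [Finset.mem_coe, Finset.mem_filter] at ha ha'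
          ext i
          have := congrFun hEq i
          rw [Fin.mk.injEq] at this
          rw [recon b a ha.2 i, recon b a' ha'.2 i, this]
      _ = n ^ m := by simp
  exact h1.trans (Nat.mul_le_mul_left _ (Finset.card_le_card himg))
end

section
/- Let m ≥ 1 and let R = ℂ[[x_1, …, x_m]] be the ring of formal power series in m variables over ℂ. Let K and K' be ideals of R with K^n ⊆ K' for some n ≥ 1, and suppose R/K is a finite-dimensional ℂ-vector space. Then R/K' is finite-dimensional over ℂ and dim_ℂ R/K' ≤ n^m · dim_ℂ R/K. -/
set_option maxHeartbeats 1000000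
set_option synthInstance.maxHeartbeats 400000

namespace MultAuxPow

open MvPowerSeries Finsupp

private noncomputable def mo (m : ℕ) : MonomialOrder (Fin m) := MonomialOrder.lex

private lemma exists_coeff_ne_zero {m : ℕ} (f : MvPowerSeries (Fin m) ℂ) (hf : f ≠ 0) :
    ∃ α, coeff (R := ℂ) α f ≠ 0 := by
  by_contra h
  push_neg at h
  exact hf (MvPowerSeries.ext fun α => by simpa using h α)

private noncomputable def ltexp {m : ℕ} (f : MvPowerSeries (Fin m) ℂ) (hf : f ≠ 0) :
    Fin m →₀ ℕ :=
  (mo m).toSyn.symm ((wellFounded_lt (α := (mo m).syn)).min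
    ((mo m).toSyn '' {α | coeff (R := ℂ) α f ≠ 0})
    (by
      obtain ⟨α, hα⟩ := exists_coeff_ne_zero f hf
      exact ⟨_, α, hα, rfl⟩))

private lemma ltexp_coeff_ne_zero {m : ℕ} (f : MvPowerSeries (Fin m) ℂ) (hf : f ≠ 0) :
    coeff (R := ℂ) (ltexp f hf) f ≠ 0 := by
  have h := (wellFounded_lt (α := (mo m).syn)).min_mem
    ((mo m).toSyn '' {α | coeff (R := ℂ) α f ≠ 0})
    (by obtain ⟨α, hα⟩ := exists_coeff_ne_zero f hf; exact ⟨_, α, hα, rfl⟩)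
  obtain ⟨α, hα, hα2⟩ := h
  have : ltexp f hf = α := by
    rw [ltexp, ← hα2, AddEquiv.symm_apply_apply]
  rwa [this]

private lemma ltexp_le {m : ℕ} (f : MvPowerSeries (Fin m) ℂ) (hf : f ≠ 0) {β : Fin m →₀ ℕ}
    (hβ : coeff (R := ℂ) β f ≠ 0) : (mo m).toSyn (ltexp f hf) ≤ (mo m).toSyn β := by
  have h := (wellFounded_lt (α := (mo m).syn)).not_lt_min
    ((mo m).toSyn '' {α | coeff (R := ℂ) α f ≠ 0})
    (Set.mem_image_of_mem _ hβ)
  rw [ltexp, AddEquiv.apply_symm_apply]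
  exact not_lt.mp h

private lemma ltexp_monomial {m : ℕ} (γ : Fin m →₀ ℕ) (c : ℂ)
    (h : monomial (R := ℂ) γ c ≠ 0) : ltexp _ h = γ := by
  classical
  have := ltexp_coeff_ne_zero _ h
  rw [coeff_monomial] at this
  split_ifs at this with h'
  · exact h'
  · exact absurd rfl this

attribute [irreducible] ltexp mo

private lemma coeff_ltexp_add_mul {m : ℕ} (f g : MvPowerSeries (Fin m) ℂ)
    (hf : f ≠ 0) (hg : g ≠ 0) :
    coeff (R := ℂ) (ltexp f hf + ltexp g hg) (f * g)
      = coeff (R := ℂ) (ltexp f hf) f * coeff (R := ℂ) (ltexp g hg) g := by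
  classical
  rw [coeff_mul]
  apply Finset.sum_eq_single (ltexp f hf, ltexp g hg)
  · intro p hp hne
    by_contra hval
    have h1 : coeff (R := ℂ) p.1 f ≠ 0 := left_ne_zero_of_mul hval
    have h2 : coeff (R := ℂ) p.2 g ≠ 0 := right_ne_zero_of_mul hval
    have hle1 := ltexp_le f hf h1
    have hle2 := ltexp_le g hg h2
    rw [Finset.HasAntidiagonal.mem_antidiagonal] at hp
    have hsum : p.1 + p.2 = ltexp f hf + ltexp g hg := hp
    have e1 : (mo m).toSyn p.1 + (mo m).toSyn p.2
        = (mo m).toSyn (ltexp f hf) + (mo m).toSyn (ltexp g hg) := by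
      rw [← map_add, ← map_add, hsum]
    have hp1 : (mo m).toSyn p.1 = (mo m).toSyn (ltexp f hf) := by
      rcases lt_or_eq_of_le hle1 with h | h
      · exfalso
        have hlt := add_lt_add_of_lt_of_le h hle2
        rw [e1] at hlt
        exact lt_irrefl _ hlt
      · exact h.symm
    have hp2 : (mo m).toSyn p.2 = (mo m).toSyn (ltexp g hg) := by
      rw [hp1] at e1
      exact add_left_cancel e1
    exact hne (Prod.ext ((mo m).toSyn.injective hp1) ((mo m).toSyn.injective hp2))
  · intro h
    simp [Finset.mem_antidiagonal] at h

private lemma ltexp_le_of_coeff_mul {m : ℕ} (f g : MvPowerSeries (Fin m) ℂ)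
    (hf : f ≠ 0) (hg : g ≠ 0) {β : Fin m →₀ ℕ} (hβ : coeff (R := ℂ) β (f * g) ≠ 0) :
    (mo m).toSyn (ltexp f hf + ltexp g hg) ≤ (mo m).toSyn β := by
  classical
  rw [coeff_mul] at hβ
  obtain ⟨p, hp, hpne⟩ := Finset.exists_ne_zero_of_sum_ne_zero hβ
  have h1 := ltexp_le f hf (left_ne_zero_of_mul hpne)
  have h2 := ltexp_le g hg (right_ne_zero_of_mul hpne)
  rw [Finset.HasAntidiagonal.mem_antidiagonal] at hp
  have hsum : p.1 + p.2 = β := hp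
  calc (mo m).toSyn (ltexp f hf + ltexp g hg)
      = (mo m).toSyn (ltexp f hf) + (mo m).toSyn (ltexp g hg) := map_add _ _ _
    _ ≤ (mo m).toSyn p.1 + (mo m).toSyn p.2 := add_le_add h1 h2
    _ = (mo m).toSyn β := by rw [← map_add, hsum]

private lemma mul_ne_zero_ltexp {m : ℕ} (f g : MvPowerSeries (Fin m) ℂ)
    (hf : f ≠ 0) (hg : g ≠ 0) :
    ∃ h : f * g ≠ 0, ltexp (f * g) h = ltexp f hf + ltexp g hg := by
  have hco : coeff (R := ℂ) (ltexp f hf + ltexp g hg) (f * g) ≠ 0 := by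
    rw [coeff_ltexp_add_mul f g hf hg]
    exact mul_ne_zero (ltexp_coeff_ne_zero f hf) (ltexp_coeff_ne_zero g hg)
  have hne : f * g ≠ 0 := fun h => hco (by simp [h])
  refine ⟨hne, (mo m).toSyn.injective (le_antisymm (ltexp_le _ hne hco)
    (ltexp_le_of_coeff_mul f g hf hg (ltexp_coeff_ne_zero _ hne)))⟩

private lemma pow_ne_zero_ltexp {m : ℕ} (f : MvPowerSeries (Fin m) ℂ) (hf : f ≠ 0) (k : ℕ) :
    ∃ h : f ^ k ≠ 0, ltexp (f ^ k) h = k • ltexp f hf := by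
  induction k with
  | zero =>
    rw [pow_zero, zero_smul, ← monomial_zero_one]
    have hne : (monomial (R := ℂ) (0 : Fin m →₀ ℕ)) 1 ≠ 0 := by
      intro h
      have h2 := congrArg (coeff (R := ℂ) (0 : Fin m →₀ ℕ)) h
      classical simp [coeff_monomial] at h2
    exact ⟨hne, ltexp_monomial _ _ hne⟩
  | succ k ih =>
    obtain ⟨hk, hlk⟩ := ih
    obtain ⟨hne, hlt⟩ := mul_ne_zero_ltexp (f ^ k) f hk hf
    rw [pow_succ]
    exact ⟨hne, by rw [hlt, hlk, succ_nsmul]⟩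

private lemma monomial_one_ne_zero {m : ℕ} (γ : Fin m →₀ ℕ) :
    (monomial (R := ℂ) γ 1 : MvPowerSeries (Fin m) ℂ) ≠ 0 := by
  classical
  intro h
  have h2 := congrArg (coeff (R := ℂ) γ) h
  simp [coeff_monomial] at h2

private noncomputable def boxF (m B : ℕ) : Finset (Fin m →₀ ℕ) :=
  Finset.image (fun g : Fin m → Fin B => Finsupp.equivFunOnFinite.symm (fun i => (g i : ℕ)))
    Finset.univ

private lemma mem_boxF {m B : ℕ} {α : Fin m →₀ ℕ} (h : ∀ i, α i < B) : α ∈ boxF m B := by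
  rw [boxF, Finset.mem_image]
  refine ⟨fun i => ⟨α i, h i⟩, Finset.mem_univ _, ?_⟩
  ext i
  rfl

private def S0 {m : ℕ} (K : Ideal (MvPowerSeries (Fin m) ℂ)) : Set (Fin m →₀ ℕ) :=
  {α | ∃ (f : MvPowerSeries (Fin m) ℂ) (hf : f ≠ 0), f ∈ K ∧ ltexp f hf = α}

private lemma mem_S0_of_le {m : ℕ} (K : Ideal (MvPowerSeries (Fin m) ℂ)) {s : Fin m → ℕ}
    (hsK : ∀ i, (X i : MvPowerSeries (Fin m) ℂ) ^ s i ∈ K)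
    {α : Fin m →₀ ℕ} {i : Fin m} (hi : s i ≤ α i) : α ∈ S0 K := by
  classical
  have hle : Finsupp.single i (s i) ≤ α := Finsupp.single_le_iff.mpr hi
  have heq : monomial (R := ℂ) α (1 : ℂ)
      = monomial (R := ℂ) (α - Finsupp.single i (s i)) 1 * ((X i : MvPowerSeries (Fin m) ℂ) ^ s i) := by
    rw [X_pow_eq, monomial_mul_monomial, one_mul, tsub_add_cancel_of_le hle]
  have hfK : (monomial (R := ℂ) α 1 : MvPowerSeries (Fin m) ℂ) ∈ K := by
    rw [heq]
    exact Ideal.mul_mem_left _ _ (hsK i)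
  exact ⟨_, monomial_one_ne_zero α, hfK, ltexp_monomial _ _ (monomial_one_ne_zero α)⟩

private lemma card_le_finrank {m : ℕ} (K : Ideal (MvPowerSeries (Fin m) ℂ))
    [FiniteDimensional ℂ (MvPowerSeries (Fin m) ℂ ⧸ K)]
    (F : Finset (Fin m →₀ ℕ)) (hF : ∀ α ∈ F, α ∉ S0 K) :
    F.card ≤ Module.finrank ℂ (MvPowerSeries (Fin m) ℂ ⧸ K) := by
  classical
  have hli : LinearIndependent ℂ
      (fun α : F => Ideal.Quotient.mk K (monomial (R := ℂ) (α : Fin m →₀ ℕ) 1)) := by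
    rw [Fintype.linearIndependent_iff]
    intro c hc
    by_contra hne
    push_neg at hne
    obtain ⟨α₀, hα₀⟩ := hne
    set q : MvPowerSeries (Fin m) ℂ := ∑ α : F, c α • monomial (R := ℂ) (α : Fin m →₀ ℕ) 1 with hq
    have hcoeff : ∀ β, coeff (R := ℂ) β q = ∑ α : F, c α * (if β = (α : Fin m →₀ ℕ) then 1 else 0) := by
      intro β
      rw [hq, map_sum]
      refine Finset.sum_congr rfl fun α _ => ?_
      rw [map_smul, coeff_monomial]
      simp [smul_eq_mul]
    have hqK : q ∈ K := by
      have hmk : (Ideal.Quotient.mkₐ ℂ K) q = 0 := by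
        rw [hq, map_sum]
        simp_rw [map_smul]
        rw [Ideal.Quotient.mkₐ_eq_mk]
        exact hc
      rw [← Ideal.Quotient.eq_zero_iff_mem, ← Ideal.Quotient.mkₐ_eq_mk ℂ K]
      exact hmk
    have hq0 : q ≠ 0 := by
      intro h0
      apply hα₀
      have := hcoeff (α₀ : Fin m →₀ ℕ)
      rw [h0, map_zero] at this
      rw [Finset.sum_eq_single α₀] at this
      · simpa using this.symm
      · intro α _ hαne
        have : (α₀ : Fin m →₀ ℕ) ≠ (α : Fin m →₀ ℕ) :=
          fun h => hαne (Subtype.coe_injective h.symm)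
        simp [this]
      · intro h
        exact absurd (Finset.mem_univ α₀) h
    have hmem : ltexp q hq0 ∈ S0 K := ⟨q, hq0, hqK, rfl⟩
    have hco := ltexp_coeff_ne_zero q hq0
    rw [hcoeff] at hco
    obtain ⟨α, -, hα⟩ := Finset.exists_ne_zero_of_sum_ne_zero hco
    have : ltexp q hq0 = (α : Fin m →₀ ℕ) := by
      by_contra h
      simp [h] at hα
    rw [this] at hmem
    exact hF _ α.2 hmem
  calc F.card = Fintype.card F := (Fintype.card_coe F).symm
    _ ≤ Module.finrank ℂ (MvPowerSeries (Fin m) ℂ ⧸ K) := hli.fintype_card_le_finrank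

private lemma mem_pow_of_coeff_low_eq_zero {m n : ℕ} (hm : 1 ≤ m)
    (K : Ideal (MvPowerSeries (Fin m) ℂ)) (s : Fin m → ℕ)
    (hsK : ∀ i, (X i : MvPowerSeries (Fin m) ℂ) ^ s i ∈ K)
    (f : MvPowerSeries (Fin m) ℂ)
    (hf : ∀ γ : Fin m →₀ ℕ, (∑ i, γ i) < (∑ i, n * s i) → coeff (R := ℂ) γ f = 0) :
    f ∈ K ^ n := by
  classical
  have hne : Nonempty (Fin m) := ⟨⟨0, hm⟩⟩
  set t : Fin m → ℕ := fun i => n * s i with ht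
  have hex : ∀ γ : Fin m →₀ ℕ, coeff (R := ℂ) γ f ≠ 0 → ∃ i, t i ≤ γ i := by
    intro γ hγ
    by_contra h
    push_neg at h
    exact hγ (hf γ (Finset.sum_lt_sum_of_nonempty Finset.univ_nonempty fun i _ => h i))
  set g : Fin m → MvPowerSeries (Fin m) ℂ := fun i =>
    fun β => if (∀ j, j < i → β j < t j)
      then coeff (R := ℂ) (β + Finsupp.single i (t i)) f else 0 with hg
  have hgcoeff : ∀ i β, coeff (R := ℂ) β (g i)
      = if (∀ j, j < i → β j < t j) then coeff (R := ℂ) (β + Finsupp.single i (t i)) f else 0 :=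
    fun i β => rfl
  have claim : f = ∑ i, monomial (R := ℂ) (Finsupp.single i (t i)) 1 * g i := by
    ext γ
    rw [map_sum]
    have hterm : ∀ i, coeff (R := ℂ) γ (monomial (R := ℂ) (Finsupp.single i (t i)) 1 * g i)
        = if Finsupp.single i (t i) ≤ γ
            then (if (∀ j, j < i → γ j < t j)
              then coeff (R := ℂ) γ f else 0)
            else 0 := by
      intro i
      rw [coeff_monomial_mul]
      by_cases h1 : Finsupp.single i (t i) ≤ γ
      · have hiff : (∀ j, j < i → (γ - Finsupp.single i (t i)) j < t j)
            ↔ (∀ j, j < i → γ j < t j) := by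
          apply forall_congr'
          intro j
          apply imp_congr_right
          intro hj
          rw [Finsupp.tsub_apply, Finsupp.single_eq_of_ne hj.ne, Nat.sub_zero]
        rw [if_pos h1, if_pos h1, one_mul, hgcoeff, tsub_add_cancel_of_le h1]
        simp only [hiff]
      · rw [if_neg h1, if_neg h1]
    rw [Finset.sum_congr rfl fun i _ => hterm i]
    by_cases hγ : coeff (R := ℂ) γ f = 0
    · rw [hγ, Finset.sum_eq_zero]
      intro i _
      split_ifs <;> rfl
    · obtain ⟨i₁, hi₁⟩ := hex γ hγ
      set P : Finset (Fin m) := Finset.univ.filter (fun i => t i ≤ γ i) with hP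
      have hPne : P.Nonempty := ⟨i₁, by simp [hP, hi₁]⟩
      set i₀ := P.min' hPne with hi₀
      have hi₀P : i₀ ∈ P := P.min'_mem hPne
      have hi₀le : t i₀ ≤ γ i₀ := by
        have := hi₀P
        simp [hP] at this
        exact this
      rw [Finset.sum_eq_single i₀]
      · rw [if_pos (Finsupp.single_le_iff.mpr hi₀le), if_pos]
        intro j hj
        by_contra hc
        push_neg at hc
        have : j ∈ P := by simp [hP, hc]
        exact absurd (P.min'_le j this) (not_le.mpr hj)
      · intro i _ hii₀
        rcases lt_or_gt_of_ne hii₀ with h | h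
        · rw [if_neg]
          intro hcon
          have : i ∈ P := by simp [hP, Finsupp.single_le_iff.mp hcon]
          exact absurd (P.min'_le i this) (not_le.mpr h)
        · by_cases h1 : Finsupp.single i (t i) ≤ γ
          · rw [if_pos h1, if_neg]
            intro hcon
            exact absurd hi₀le (not_le.mpr (hcon i₀ h))
          · rw [if_neg h1]
      · intro h
        exact absurd (Finset.mem_univ i₀) h
  rw [claim]
  apply Submodule.sum_mem
  intro i _
  have hXpow : (monomial (R := ℂ) (Finsupp.single i (t i)) 1 : MvPowerSeries (Fin m) ℂ) ∈ K ^ n := by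
    rw [← X_pow_eq, ht]
    have : (X i : MvPowerSeries (Fin m) ℂ) ^ (n * s i) = ((X i) ^ s i) ^ n := by
      rw [← pow_mul, mul_comm]
    rw [this]
    exact Ideal.pow_mem_pow (hsK i) n
  exact Ideal.mul_mem_right _ _ hXpow

private lemma span_aux {m n : ℕ} (hm : 1 ≤ m)
    (K K' : Ideal (MvPowerSeries (Fin m) ℂ)) (hKK' : K ^ n ≤ K')
    (s : Fin m → ℕ) (hs1 : ∀ i, 1 ≤ s i)
    (hsK : ∀ i, (X i : MvPowerSeries (Fin m) ℂ) ^ s i ∈ K)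
    (Efin : Finset (Fin m →₀ ℕ))
    (hE : ∀ α : Fin m →₀ ℕ, α ∉ Efin → α.mapRange (· / n) (Nat.zero_div n) ∈ S0 K) :
    ∀ f : MvPowerSeries (Fin m) ℂ,
      f ∈ (Submodule.restrictScalars ℂ (K' : Ideal (MvPowerSeries (Fin m) ℂ)))
        ⊔ Submodule.span ℂ ((fun α => monomial (R := ℂ) α (1:ℂ)) '' ↑Efin) := by
  classical
  set M := (Submodule.restrictScalars ℂ (K' : Ideal (MvPowerSeries (Fin m) ℂ)))
      ⊔ Submodule.span ℂ ((fun α => monomial (R := ℂ) α (1:ℂ)) '' (↑Efin : Set (Fin m →₀ ℕ))) with hM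
  set D := ∑ i, n * s i with hD
  set DegLt : Finset (Fin m →₀ ℕ) := (boxF m D).filter (fun γ => (∑ i, γ i) < D) with hDegLt
  have mem_DegLt : ∀ γ : Fin m →₀ ℕ, γ ∈ DegLt ↔ (∑ i, γ i) < D := by
    intro γ
    rw [hDegLt, Finset.mem_filter]
    constructor
    · exact fun h => h.2
    · intro h
      refine ⟨mem_boxF (fun i => ?_), h⟩
      calc γ i ≤ ∑ j, γ j := Finset.single_le_sum (fun j _ => Nat.zero_le _) (Finset.mem_univ i)
        _ < D := h
  set Tf : Finset (Fin m →₀ ℕ) := DegLt.filter (fun γ => γ ∉ Efin) with hTf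
  have hKnM : ∀ f : MvPowerSeries (Fin m) ℂ, f ∈ K ^ n → f ∈ M :=
    fun f hf => Submodule.mem_sup_left (hKK' hf)
  have base : ∀ f : MvPowerSeries (Fin m) ℂ,
      (Tf.filter (fun β => coeff (R := ℂ) β f ≠ 0)) = ∅ → f ∈ M := by
    intro f hbad
    set lowf := DegLt.filter (fun γ => coeff (R := ℂ) γ f ≠ 0) with hlowf
    have hlowE : ∀ γ ∈ lowf, γ ∈ Efin := by
      intro γ hγ
      rw [hlowf, Finset.mem_filter] at hγ
      by_contra hcon
      have hmem : γ ∈ Tf.filter (fun β => coeff (R := ℂ) β f ≠ 0) := by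
        rw [Finset.mem_filter, hTf, Finset.mem_filter]
        exact ⟨⟨hγ.1, hcon⟩, hγ.2⟩
      rw [hbad] at hmem
      exact absurd hmem (Finset.notMem_empty γ)
    set g := ∑ γ ∈ lowf, coeff (R := ℂ) γ f • monomial (R := ℂ) γ (1:ℂ) with hgdef
    have hgM : g ∈ M := by
      apply Submodule.mem_sup_right
      apply Submodule.sum_mem
      intro γ hγ
      exact Submodule.smul_mem _ _
        (Submodule.subset_span ⟨γ, by exact_mod_cast hlowE γ hγ, rfl⟩)
    have hcoeffg : ∀ β, coeff (R := ℂ) β g = if β ∈ lowf then coeff (R := ℂ) β f else 0 := by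
      intro β
      rw [hgdef, map_sum]
      have hterm : ∀ γ ∈ lowf,
          coeff (R := ℂ) β (coeff (R := ℂ) γ f • monomial (R := ℂ) γ (1:ℂ)) = if γ = β then coeff (R := ℂ) γ f else 0 := by
        intro γ _
        rw [map_smul, coeff_monomial]
        by_cases h : β = γ
        · simp [h]
        · simp [h, Ne.symm h]
      rw [Finset.sum_congr rfl hterm, Finset.sum_ite_eq' lowf β (fun γ => coeff (R := ℂ) γ f)]
    have hfg : f - g ∈ K ^ n := by
      apply mem_pow_of_coeff_low_eq_zero hm K s hsK
      intro γ hγ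
      rw [map_sub, hcoeffg]
      by_cases h : coeff (R := ℂ) γ f = 0
      · simp [h]
      · have hmem : γ ∈ lowf := by
          rw [hlowf, Finset.mem_filter]
          exact ⟨(mem_DegLt γ).mpr hγ, h⟩
        simp [hmem]
    have hsplit : f = (f - g) + g := by ring
    rw [hsplit]
    exact M.add_mem (hKnM _ hfg) hgM
  have key : ∀ (k : ℕ) (f : MvPowerSeries (Fin m) ℂ),
      (Tf.filter (fun γ => ∃ β ∈ Tf.filter (fun β => coeff (R := ℂ) β f ≠ 0),
        (mo m).toSyn β ≤ (mo m).toSyn γ)).card ≤ k → f ∈ M := by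
    intro k
    induction k with
    | zero =>
      intro f hf
      apply base
      rw [← Finset.not_nonempty_iff_eq_empty]
      rintro ⟨β, hβ⟩
      have hβT : β ∈ Tf := (Finset.mem_filter.mp hβ).1
      have hmem : β ∈ Tf.filter (fun γ => ∃ β' ∈ Tf.filter (fun β' => coeff (R := ℂ) β' f ≠ 0),
          (mo m).toSyn β' ≤ (mo m).toSyn γ) :=
        Finset.mem_filter.mpr ⟨hβT, β, hβ, le_rfl⟩
      have := Finset.card_pos.mpr ⟨β, hmem⟩
      omega
    | succ k ih =>
      intro f hcard
      by_cases hbad : (Tf.filter (fun β => coeff (R := ℂ) β f ≠ 0)) = ∅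
      · exact base f hbad
      · obtain ⟨α, hαbad, hαmin⟩ := Finset.exists_min_image _ (fun γ => (mo m).toSyn γ)
          (Finset.nonempty_iff_ne_empty.mpr hbad)
        have hαT : α ∈ Tf := (Finset.mem_filter.mp hαbad).1
        have hαE : α ∉ Efin := by
          have := hαT
          rw [hTf, Finset.mem_filter] at this
          exact this.2
        obtain ⟨h, hh0, hhK, hhlt⟩ := hE α hαE
        obtain ⟨hpow0, hpowlt⟩ := pow_ne_zero_ltexp h hh0 n
        have hmono0 := monomial_one_ne_zero (m := m) (α - n • α.mapRange (· / n) (Nat.zero_div n))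
        obtain ⟨hu0, hult⟩ := mul_ne_zero_ltexp _ _ hmono0 hpow0
        have hrem : (α - n • α.mapRange (· / n) (Nat.zero_div n))
            + n • α.mapRange (· / n) (Nat.zero_div n) = α := by
          ext i
          rw [Finsupp.add_apply, Finsupp.tsub_apply, Finsupp.smul_apply,
            Finsupp.mapRange_apply, smul_eq_mul]
          have hle : n * (α i / n) ≤ α i := by
            rw [Nat.mul_comm]
            exact Nat.div_mul_le_self (α i) n
          omega
        have hultα : ltexp _ hu0 = α := by
          rw [hult, ltexp_monomial _ _ hmono0, hpowlt, hhlt, hrem]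
        have huK' : monomial (R := ℂ) (α - n • α.mapRange (· / n) (Nat.zero_div n)) 1 * h ^ n ∈ K' :=
          Ideal.mul_mem_left _ _ (hKK' (Ideal.pow_mem_pow hhK n))
        have hcu : coeff (R := ℂ) α (monomial (R := ℂ) (α - n • α.mapRange (· / n) (Nat.zero_div n)) 1 * h ^ n)
            ≠ 0 := by
          have := ltexp_coeff_ne_zero _ hu0
          rwa [hultα] at this
        set u := monomial (R := ℂ) (α - n • α.mapRange (· / n) (Nat.zero_div n)) 1 * h ^ n with hu
        set c := coeff (R := ℂ) α f / coeff (R := ℂ) α u with hc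
        set f' := f - c • u with hf'
        have hstep : ∀ β, coeff (R := ℂ) β f' ≠ 0 → β ∈ Tf →
            (mo m).toSyn α < (mo m).toSyn β := by
          intro β hβ hβT
          rcases lt_trichotomy ((mo m).toSyn β) ((mo m).toSyn α) with hlt | heq | hgt
          · exfalso
            have hcuβ : coeff (R := ℂ) β u = 0 := by
              by_contra hcon
              have hle := ltexp_le u hu0 hcon
              rw [hultα] at hle
              exact absurd hle (not_le.mpr hlt)
            rw [hf', map_sub, map_smul, hcuβ, smul_zero, sub_zero] at hβ
            have hmem : β ∈ Tf.filter (fun β => coeff (R := ℂ) β f ≠ 0) :=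
              Finset.mem_filter.mpr ⟨hβT, hβ⟩
            exact absurd (hαmin β hmem) (not_le.mpr hlt)
          · exfalso
            have hβα : β = α := (mo m).toSyn.injective heq
            rw [hβα, hf', map_sub, map_smul, hc, smul_eq_mul,
              div_mul_cancel₀ _ hcu, sub_self] at hβ
            exact hβ rfl
          · exact hgt
        have hsub : (Tf.filter (fun γ => ∃ β ∈ Tf.filter (fun β => coeff (R := ℂ) β f' ≠ 0),
              (mo m).toSyn β ≤ (mo m).toSyn γ))
            ⊆ (Tf.filter (fun γ => ∃ β ∈ Tf.filter (fun β => coeff (R := ℂ) β f ≠ 0),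
              (mo m).toSyn β ≤ (mo m).toSyn γ)).erase α := by
          intro γ hγ
          rw [Finset.mem_filter] at hγ
          obtain ⟨hγT, β, hβmem, hβle⟩ := hγ
          rw [Finset.mem_filter] at hβmem
          have hαβ := hstep β hβmem.2 hβmem.1
          have hαγ : (mo m).toSyn α < (mo m).toSyn γ := lt_of_lt_of_le hαβ hβle
          rw [Finset.mem_erase]
          refine ⟨fun hcon => ?_, Finset.mem_filter.mpr ⟨hγT, α, hαbad, le_of_lt hαγ⟩⟩
          rw [hcon] at hαγ
          exact lt_irrefl _ hαγ
        have hαS : α ∈ Tf.filter (fun γ => ∃ β ∈ Tf.filter (fun β => coeff (R := ℂ) β f ≠ 0),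
            (mo m).toSyn β ≤ (mo m).toSyn γ) :=
          Finset.mem_filter.mpr ⟨hαT, α, hαbad, le_rfl⟩
        have hcard' : (Tf.filter (fun γ => ∃ β ∈ Tf.filter (fun β => coeff (R := ℂ) β f' ≠ 0),
            (mo m).toSyn β ≤ (mo m).toSyn γ)).card ≤ k := by
          have h1 := Finset.card_le_card hsub
          rw [Finset.card_erase_of_mem hαS] at h1
          omega
        have hf'M : f' ∈ M := ih f' hcard'
        have huM : u ∈ M := Submodule.mem_sup_left huK'
        have hsplit : f = f' + c • u := by rw [hf']; ring
        rw [hsplit]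
        exact M.add_mem hf'M (M.smul_mem c huM)
  intro f
  exact key _ f le_rfl

private lemma exists_pow_X_mem {m : ℕ} (K : Ideal (MvPowerSeries (Fin m) ℂ)) (hK : K ≠ ⊤)
    [FiniteDimensional ℂ (MvPowerSeries (Fin m) ℂ ⧸ K)] (i : Fin m) :
    ∃ s : ℕ, 1 ≤ s ∧ (X i : MvPowerSeries (Fin m) ℂ) ^ s ∈ K := by
  classical
  set d := Module.finrank ℂ (MvPowerSeries (Fin m) ℂ ⧸ K) with hd
  have hnli : ¬ LinearIndependent ℂ
      (fun k : Fin (d+1) => Ideal.Quotient.mk K ((X i : MvPowerSeries (Fin m) ℂ) ^ (k:ℕ))) := by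
    intro hli
    have := hli.fintype_card_le_finrank
    rw [Fintype.card_fin] at this
    omega
  rw [Fintype.linearIndependent_iff] at hnli
  push_neg at hnli
  obtain ⟨c, hc0, k₁, hk₁⟩ := hnli
  set T := Finset.univ.filter (fun k : Fin (d+1) => c k ≠ 0) with hT
  have hTne : T.Nonempty := ⟨k₁, by simp [hT, hk₁]⟩
  set k₀ := T.min' hTne with hk₀
  have hk₀T : k₀ ∈ T := T.min'_mem hTne
  have hck₀ : c k₀ ≠ 0 := by
    have := hk₀T
    rw [hT, Finset.mem_filter] at this
    exact this.2
  set q : MvPowerSeries (Fin m) ℂ := ∑ k : Fin (d+1), c k • (X i) ^ (k:ℕ) with hq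
  have hqK : q ∈ K := by
    rw [← Ideal.Quotient.eq_zero_iff_mem, ← Ideal.Quotient.mkₐ_eq_mk ℂ K]
    rw [hq, map_sum]
    simp_rw [map_smul]
    rw [Ideal.Quotient.mkₐ_eq_mk]
    exact hc0
  set u : MvPowerSeries (Fin m) ℂ := ∑ k ∈ T, c k • (X i) ^ ((k:ℕ) - (k₀:ℕ)) with hudef
  have hqu : q = (X i) ^ (k₀:ℕ) * u := by
    rw [hudef, Finset.mul_sum, hq]
    rw [← Finset.sum_subset (Finset.subset_univ T) (fun k _ hk => by
      have : c k = 0 := by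
        by_contra hc
        exact hk (by rw [hT, Finset.mem_filter]; exact ⟨Finset.mem_univ _, hc⟩)
      rw [this, zero_smul])]
    refine Finset.sum_congr rfl fun k hkT => ?_
    have hle : (k₀:ℕ) ≤ (k:ℕ) := T.min'_le k hkT
    rw [mul_smul_comm, ← pow_add, Nat.add_sub_cancel' hle]
  have hconstXpow : ∀ e : ℕ, 0 < e → coeff (R := ℂ) (0 : Fin m →₀ ℕ) ((X i : MvPowerSeries (Fin m) ℂ)^e) = 0 := by
    intro e he
    rw [X_pow_eq, coeff_monomial, if_neg]
    intro hcon
    have := Finsupp.single_eq_zero.mp hcon.symm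
    omega
  have hconstu : coeff (R := ℂ) (0 : Fin m →₀ ℕ) u = c k₀ := by
    rw [hudef, map_sum]
    rw [Finset.sum_eq_single k₀]
    · rw [map_smul, Nat.sub_self, pow_zero, coeff_zero_one, smul_eq_mul, mul_one]
    · intro k hkT hkne
      have hle : (k₀:ℕ) ≤ (k:ℕ) := T.min'_le k hkT
      have hne : (k:ℕ) ≠ (k₀:ℕ) := fun h => hkne (Fin.ext h)
      rw [map_smul, hconstXpow _ (by omega), smul_zero]
    · intro h
      exact absurd hk₀T h
  have hu_unit : IsUnit u := by
    rw [isUnit_iff_constantCoeff, ← coeff_zero_eq_constantCoeff_apply, hconstu]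
    exact isUnit_iff_ne_zero.mpr hck₀
  obtain ⟨v, hv⟩ := hu_unit
  have hXK : (X i : MvPowerSeries (Fin m) ℂ)^(k₀:ℕ) ∈ K := by
    have heq : (X i : MvPowerSeries (Fin m) ℂ)^(k₀:ℕ) = q * ↑v⁻¹ := by
      rw [hqu, ← hv, mul_assoc, Units.mul_inv, mul_one]
    rw [heq]
    exact Ideal.mul_mem_right _ _ hqK
  refine ⟨(k₀:ℕ), ?_, hXK⟩
  by_contra hcon
  push_neg at hcon
  have h0 : ((k₀:ℕ)) = 0 := by omega
  rw [h0, pow_zero] at hXK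
  exact hK ((Ideal.eq_top_iff_one K).mpr hXK)

end MultAuxPow

/-- Let `R = ℂ[[x₁, …, xₘ]]` with `m ≥ 1`, and let `K, K'` be ideals of `R` with
`K ^ n ⊆ K'` for some `n ≥ 1`. If `R ⧸ K` is finite-dimensional over `ℂ`, then
so is `R ⧸ K'`, and `dim_ℂ R⧸K' ≤ n ^ m * dim_ℂ R⧸K`. -/
theorem mult_le_pow_mul_mult_of_pow_le_powerSeries
    (m : ℕ) (hm : 1 ≤ m)
    (K K' : Ideal (MvPowerSeries (Fin m) ℂ)) (n : ℕ) (hn : 1 ≤ n)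
    (hKK' : K ^ n ≤ K')
    (hfin : FiniteDimensional ℂ (MvPowerSeries (Fin m) ℂ ⧸ K)) :
    FiniteDimensional ℂ (MvPowerSeries (Fin m) ℂ ⧸ K') ∧
      Module.finrank ℂ (MvPowerSeries (Fin m) ℂ ⧸ K') ≤
        n ^ m * Module.finrank ℂ (MvPowerSeries (Fin m) ℂ ⧸ K) := by
  classical
  open MvPowerSeries MultAuxPow in
  by_cases hKtop : K = ⊤
  · have hK' : K' = ⊤ := by
      rw [eq_top_iff]
      rw [hKtop, Ideal.top_pow] at hKK'
      exact hKK'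
    have hsub : Subsingleton (MvPowerSeries (Fin m) ℂ ⧸ K') :=
      Ideal.Quotient.subsingleton_iff.mpr hK'
    constructor
    · refine ⟨⟨∅, ?_⟩⟩
      rw [Finset.coe_empty, Submodule.span_empty, eq_top_iff]
      intro x _
      rw [Subsingleton.elim x 0]
      exact Submodule.zero_mem ⊥
    · rw [Module.finrank_zero_of_subsingleton]
      exact Nat.zero_le _
  · choose s hs1 hsK using fun i => MultAuxPow.exists_pow_X_mem K hKtop i
    set d := Module.finrank ℂ (MvPowerSeries (Fin m) ℂ ⧸ K) with hd
    set B := Finset.univ.sup s with hB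
    set E0fin := (MultAuxPow.boxF m B).filter (fun α => α ∉ MultAuxPow.S0 K) with hE0
    have hE0card : E0fin.card ≤ d :=
      MultAuxPow.card_le_finrank K E0fin (fun α hα => (Finset.mem_filter.mp hα).2)
    have hS0mem : ∀ α : Fin m →₀ ℕ, α ∉ MultAuxPow.S0 K → α ∈ E0fin := by
      intro α hα
      rw [hE0, Finset.mem_filter]
      refine ⟨MultAuxPow.mem_boxF (fun i => ?_), hα⟩
      by_contra hcon
      push_neg at hcon
      exact hα (MultAuxPow.mem_S0_of_le K hsK
        (le_trans (Finset.le_sup (Finset.mem_univ i)) hcon))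
    set Efin := Finset.image (fun p : (Fin m →₀ ℕ) × (Fin m → Fin n) =>
        n • p.1 + Finsupp.equivFunOnFinite.symm (fun i => (p.2 i : ℕ)))
      (E0fin ×ˢ (Finset.univ : Finset (Fin m → Fin n))) with hEfin
    have hEcard : Efin.card ≤ n ^ m * d := by
      calc Efin.card ≤ (E0fin ×ˢ (Finset.univ : Finset (Fin m → Fin n))).card :=
            Finset.card_image_le
        _ = E0fin.card * (Finset.univ : Finset (Fin m → Fin n)).card :=
            Finset.card_product _ _
        _ = E0fin.card * n ^ m := by
            rw [Finset.card_univ, Fintype.card_fun, Fintype.card_fin, Fintype.card_fin]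
        _ ≤ d * n ^ m := Nat.mul_le_mul_right _ hE0card
        _ = n ^ m * d := Nat.mul_comm _ _
    have hE : ∀ α : Fin m →₀ ℕ, α ∉ Efin →
        α.mapRange (· / n) (Nat.zero_div n) ∈ MultAuxPow.S0 K := by
      intro α hα
      by_contra hcon
      apply hα
      rw [hEfin, Finset.mem_image]
      refine ⟨(α.mapRange (· / n) (Nat.zero_div n),
        fun i => (⟨α i % n, Nat.mod_lt _ (by omega)⟩ : Fin n)), ?_, ?_⟩
      · rw [Finset.mem_product]
        exact ⟨hS0mem _ hcon, Finset.mem_univ _⟩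
      · ext i
        rw [Finsupp.add_apply, Finsupp.smul_apply, Finsupp.mapRange_apply, smul_eq_mul]
        have h1 : (Finsupp.equivFunOnFinite.symm
            (fun i => (((⟨α i % n, Nat.mod_lt _ (by omega)⟩ : Fin n)) : ℕ)) : Fin m →₀ ℕ) i
            = α i % n := rfl
        rw [h1]
        exact Nat.div_add_mod (α i) n
    have hspan := MultAuxPow.span_aux hm K K' hKK' s hs1 hsK Efin hE
    set φ := (Ideal.Quotient.mkₐ ℂ K').toLinearMap with hφ
    set Q := (Efin.image (fun α => MvPowerSeries.monomial (R := ℂ) α (1:ℂ))).image φ with hQ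
    have htop' : Submodule.span ℂ (↑Q : Set (MvPowerSeries (Fin m) ℂ ⧸ K')) = ⊤ := by
      rw [eq_top_iff]
      intro x _
      obtain ⟨y, rfl⟩ := Ideal.Quotient.mk_surjective x
      have hy := hspan y
      rw [Submodule.mem_sup] at hy
      obtain ⟨a, ha, b, hb, hab⟩ := hy
      have hmkeq : Ideal.Quotient.mk K' y = φ y := by
        rw [hφ]
        simp [Ideal.Quotient.mkₐ_eq_mk]
      have hφa : φ a = 0 := by
        rw [hφ]
        have : Ideal.Quotient.mk K' a = 0 := Ideal.Quotient.eq_zero_iff_mem.mpr ha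
        simpa [Ideal.Quotient.mkₐ_eq_mk] using this
      rw [hmkeq, ← hab, map_add, hφa, zero_add]
      have hmem : φ b ∈ Submodule.map φ
          (Submodule.span ℂ ((fun α => MvPowerSeries.monomial (R := ℂ) α (1:ℂ)) '' ↑Efin)) :=
        Submodule.mem_map_of_mem hb
      rw [Submodule.map_span] at hmem
      have himg : ⇑φ '' ((fun α => MvPowerSeries.monomial (R := ℂ) α (1:ℂ)) '' ↑Efin)
          = (↑Q : Set (MvPowerSeries (Fin m) ℂ ⧸ K')) := by
        simp only [hQ, Finset.coe_image]
      rw [himg] at hmem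
      exact hmem
    have hfd : FiniteDimensional ℂ (MvPowerSeries (Fin m) ℂ ⧸ K') := ⟨⟨Q, htop'⟩⟩
    refine ⟨hfd, ?_⟩
    have hr : Module.finrank ℂ (MvPowerSeries (Fin m) ℂ ⧸ K') ≤ Q.card := by
      have h1 := finrank_span_finset_le_card (R := ℂ) Q
      rw [Set.finrank, htop', finrank_top] at h1
      exact h1
    calc Module.finrank ℂ (MvPowerSeries (Fin m) ℂ ⧸ K') ≤ Q.card := hr
      _ ≤ (Efin.image (fun α => MvPowerSeries.monomial (R := ℂ) α (1:ℂ))).card :=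
          Finset.card_image_le
      _ ≤ Efin.card := Finset.card_image_le
      _ ≤ n ^ m * d := hEcard
end

section
/- Let R = ℂ[x, y] be the polynomial ring in two variables and let K be an ideal of R whose radical equals the maximal ideal (x, y) (so that R/K is a finite-dimensional ℂ-vector space and the zero set of K is the origin only). Let f, g ∈ K and let J = (∂f/∂x)(∂g/∂y) − (∂f/∂y)(∂g/∂x) be their Jacobian determinant. Then dim_ℂ R/K ≤ dim_ℂ R/(K + (J)) + 1. -/
set_option maxHeartbeats 1000000
set_option synthInstance.maxHeartbeats 400000

open MvPolynomial TensorProduct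

noncomputable section
namespace JacSocle

abbrev R2 : Type := MvPolynomial (Fin 2) ℂ
abbrev W : Type := R2 ⊗[ℂ] R2

/-- Jacobian determinant. -/
def Jc (f g : R2) : R2 := pderiv 0 f * pderiv 1 g - pderiv 1 f * pderiv 0 g

def e1 : R2 →ₐ[ℂ] W := Algebra.TensorProduct.includeLeft
def e2 : R2 →ₐ[ℂ] W := Algebra.TensorProduct.includeRight
def dg : W →ₐ[ℂ] R2 := Algebra.TensorProduct.lmul' ℂ

@[simp] lemma dg_tmul (a b : R2) : dg (a ⊗ₜ[ℂ] b) = a * b :=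
  Algebra.TensorProduct.lmul'_apply_tmul a b

@[simp] lemma dg_e1 (r : R2) : dg (e1 r) = r := by
  simp [e1, Algebra.TensorProduct.includeLeft_apply, dg]

@[simp] lemma dg_e2 (r : R2) : dg (e2 r) = r := by
  simp [e2, Algebra.TensorProduct.includeRight_apply, dg]

/-- apply a functional to the right tensor factor -/
def Th (v : R2 →ₗ[ℂ] ℂ) : W →ₗ[ℂ] R2 :=
  (TensorProduct.rid ℂ R2).toLinearMap ∘ₗ LinearMap.lTensor R2 v

@[simp] lemma Th_tmul (v : R2 →ₗ[ℂ] ℂ) (a b : R2) :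
    Th v (a ⊗ₜ[ℂ] b) = v b • a := by
  simp [Th]

lemma Th_e1_mul (v : R2 →ₗ[ℂ] ℂ) (r : R2) (F : W) :
    Th v (e1 r * F) = r * Th v F := by
  induction F using TensorProduct.induction_on with
  | zero => simp
  | tmul a b =>
      rw [show e1 r * (a ⊗ₜ[ℂ] b) = (r * a) ⊗ₜ[ℂ] (1 * b) by
        rw [e1, Algebra.TensorProduct.includeLeft_apply,
          Algebra.TensorProduct.tmul_mul_tmul]]
      rw [one_mul, Th_tmul, Th_tmul, mul_smul_comm]
  | add x y hx hy => simp [mul_add, hx, hy]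

lemma Th_e2_mul (v : R2 →ₗ[ℂ] ℂ) (r : R2) (F : W) :
    Th v (e2 r * F) = Th (v ∘ₗ LinearMap.mulLeft ℂ r) F := by
  induction F using TensorProduct.induction_on with
  | zero => simp
  | tmul a b =>
      rw [show e2 r * (a ⊗ₜ[ℂ] b) = (1 * a) ⊗ₜ[ℂ] (r * b) by
        rw [e2, Algebra.TensorProduct.includeRight_apply,
          Algebra.TensorProduct.tmul_mul_tmul]]
      rw [one_mul, Th_tmul, Th_tmul]
      rfl
  | add x y hx hy => simp [mul_add, hx, hy]

lemma Th_zero_fn (F : W) : Th 0 F = 0 := by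
  induction F using TensorProduct.induction_on with
  | zero => simp
  | tmul a b => simp
  | add x y hx hy => simp [hx, hy]

/-- evaluation of first factor at a point -/
def phi (p : Fin 2 → ℂ) : W →ₐ[ℂ] R2 :=
  Algebra.TensorProduct.productMap (aeval fun i => C (p i)) (AlgHom.id ℂ R2)

lemma aeval_C_comp (p : Fin 2 → ℂ) (a : R2) :
    aeval (fun i => (C (p i) : R2)) a = C (eval p a) := by
  induction a using MvPolynomial.induction_on with
  | C c => simp [algebraMap_eq]
  | add f q hf hq => simp only [map_add, hf, hq]
  | mul_X q i hq => rw [map_mul, hq, aeval_X, map_mul, eval_X, map_mul]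

@[simp] lemma phi_tmul (p : Fin 2 → ℂ) (a b : R2) :
    phi p (a ⊗ₜ[ℂ] b) = C (eval p a) * b := by
  rw [phi, Algebra.TensorProduct.productMap_apply_tmul, aeval_C_comp]
  simp

lemma eval_Th (p : Fin 2 → ℂ) (v : R2 →ₗ[ℂ] ℂ) (F : W) :
    eval p (Th v F) = v (phi p F) := by
  induction F using TensorProduct.induction_on with
  | zero => simp
  | tmul a b =>
      rw [Th_tmul, phi_tmul]
      have h1 : eval p (v b • a) = v b * eval p a := by
        rw [smul_eq_C_mul, map_mul, eval_C]
      have h2 : v (C (eval p a) * b) = eval p a * v b := by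
        rw [← smul_eq_C_mul, map_smul, smul_eq_mul]
      rw [h1, h2, mul_comm]
  | add x y hx hy => simp [hx, hy]

/-- divided differences: `e1 χ - e2 χ = ξ·a + η·b` with diagonal values the
partial derivatives. -/
lemma dd_exists (χ : R2) : ∃ a b : W,
    e1 χ - e2 χ = (e1 (X 0) - e2 (X 0)) * a + (e1 (X 1) - e2 (X 1)) * b ∧
      dg a = pderiv 0 χ ∧ dg b = pderiv 1 χ := by
  induction χ using MvPolynomial.induction_on with
  | C c =>
      refine ⟨0, 0, ?_, by simp, by simp⟩
      rw [show (C c : R2) = algebraMap ℂ R2 c by rw [algebraMap_eq],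
        AlgHom.commutes, AlgHom.commutes, sub_self]
      simp
  | add f q hf hq =>
      obtain ⟨a1, b1, h1, d1x, d1y⟩ := hf
      obtain ⟨a2, b2, h2, d2x, d2y⟩ := hq
      refine ⟨a1 + a2, b1 + b2, ?_, by simp [d1x, d2x], by simp [d1y, d2y]⟩
      rw [map_add, map_add]
      rw [mul_add, mul_add]
      rw [show e1 f + e1 q - (e2 f + e2 q) = (e1 f - e2 f) + (e1 q - e2 q) by ring]
      rw [h1, h2]; ring
  | mul_X q i hq =>
      obtain ⟨a, b, h, dx, dy⟩ := hq
      fin_cases i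
      · refine ⟨e1 q + a * e2 (X 0), b * e2 (X 0), ?_, ?_, ?_⟩
        · rw [map_mul, map_mul]
          calc e1 q * e1 (X 0) - e2 q * e2 (X 0)
              = (e1 (X 0) - e2 (X 0)) * e1 q + (e1 q - e2 q) * e2 (X 0) := by ring
            _ = (e1 (X 0) - e2 (X 0)) * e1 q
                + ((e1 (X 0) - e2 (X 0)) * a + (e1 (X 1) - e2 (X 1)) * b) * e2 (X 0) := by
                rw [h]
            _ = (e1 (X 0) - e2 (X 0)) * (e1 q + a * e2 (X 0))
                + (e1 (X 1) - e2 (X 1)) * (b * e2 (X 0)) := by ring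
        · show dg (e1 q + a * e2 (X 0)) = pderiv 0 (q * X 0)
          rw [pderiv_mul, pderiv_X_self, mul_one, map_add, map_mul, dg_e1, dg_e2, dx]
          ring
        · show dg (b * e2 (X 0)) = pderiv 1 (q * X 0)
          rw [pderiv_mul, pderiv_X_of_ne (by decide : (0:Fin 2) ≠ 1), mul_zero, add_zero,
            map_mul, dg_e2, dy]
      · refine ⟨a * e2 (X 1), e1 q + b * e2 (X 1), ?_, ?_, ?_⟩
        · rw [map_mul, map_mul]
          calc e1 q * e1 (X 1) - e2 q * e2 (X 1)
              = (e1 (X 1) - e2 (X 1)) * e1 q + (e1 q - e2 q) * e2 (X 1) := by ring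
            _ = (e1 (X 1) - e2 (X 1)) * e1 q
                + ((e1 (X 0) - e2 (X 0)) * a + (e1 (X 1) - e2 (X 1)) * b) * e2 (X 1) := by
                rw [h]
            _ = (e1 (X 0) - e2 (X 0)) * (a * e2 (X 1))
                + (e1 (X 1) - e2 (X 1)) * (e1 q + b * e2 (X 1)) := by ring
        · show dg (a * e2 (X 1)) = pderiv 0 (q * X 1)
          rw [pderiv_mul, pderiv_X_of_ne (by decide : (1:Fin 2) ≠ 0), mul_zero, add_zero,
            map_mul, dg_e2, dx]
        · show dg (e1 q + b * e2 (X 1)) = pderiv 1 (q * X 1)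
          rw [pderiv_mul, pderiv_X_self, mul_one, map_add, map_mul, dg_e1, dg_e2, dy]
          ring

/-- Wiebe's lemma: the determinant of a matrix expressing a coprime pair in terms
of the maximal ideal at a common zero is not in the ideal. -/
lemma wiebe {f g A B C' D : R2} {p : Fin 2 → ℂ} (hf : f ≠ 0) (hg : g ≠ 0)
    (hrp : IsRelPrime f g)
    (hfd : f = (X 0 - C (p 0)) * A + (X 1 - C (p 1)) * B)
    (hgd : g = (X 0 - C (p 0)) * C' + (X 1 - C (p 1)) * D) :
    A * D - B * C' ∉ Ideal.span {f, g} := by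
  intro hmem
  obtain ⟨α, β, hαβ⟩ := Ideal.mem_span_pair.mp hmem
  set ξ : R2 := X 0 - C (p 0) with hξ
  set η : R2 := X 1 - C (p 1) with hη
  have h1 : (D - ξ * α) * f = (B + ξ * β) * g := by
    have : ξ * (A * D - B * C') = D * f - B * g := by rw [hfd, hgd]; ring
    calc (D - ξ * α) * f = D * f - ξ * (α * f) := by ring
      _ = ξ * (A * D - B * C') + B * g - ξ * (α * f) := by rw [this]; ring
      _ = ξ * (α * f + β * g) + B * g - ξ * (α * f) := by rw [hαβ]
      _ = (B + ξ * β) * g := by ring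
  have hdvd1 : g ∣ (D - ξ * α) := by
    refine hrp.symm.dvd_of_dvd_mul_right ⟨B + ξ * β, ?_⟩
    rw [h1]; ring
  obtain ⟨t, ht⟩ := hdvd1
  have ht2 : B + ξ * β = t * f := by
    have : g * (t * f) = g * (B + ξ * β) := by
      calc g * (t * f) = (D - ξ * α) * f := by rw [ht]; ring
        _ = (B + ξ * β) * g := h1
        _ = g * (B + ξ * β) := by ring
    exact (mul_left_cancel₀ hg this).symm
  have h3 : (A - η * β) * g = (C' + η * α) * f := by
    have : η * (A * D - B * C') = A * g - C' * f := by rw [hfd, hgd]; ring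
    calc (A - η * β) * g = A * g - η * (β * g) := by ring
      _ = η * (A * D - B * C') + C' * f - η * (β * g) := by rw [this]; ring
      _ = η * (α * f + β * g) + C' * f - η * (β * g) := by rw [hαβ]
      _ = (C' + η * α) * f := by ring
  have hdvd2 : f ∣ (A - η * β) := by
    refine hrp.dvd_of_dvd_mul_right ⟨C' + η * α, ?_⟩
    rw [h3]; ring
  obtain ⟨s, hs⟩ := hdvd2
  have hfinal : f * (1 - ξ * s - η * t) = 0 := by
    have hA : A = η * β + f * s := by rw [← hs]; ring
    have hB : B = t * f - ξ * β := by rw [← ht2]; ring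
    calc f * (1 - ξ * s - η * t) = f - (ξ * (f * s) + η * (t * f)) := by ring
      _ = (ξ * A + η * B) - (ξ * (f * s) + η * (t * f)) := by rw [← hfd]
      _ = (ξ * (η * β + f * s) + η * (t * f - ξ * β)) - (ξ * (f * s) + η * (t * f)) := by
          rw [← hA, ← hB]
      _ = 0 := by ring
  have : (1 : R2) - ξ * s - η * t = 0 := by
    rcases mul_eq_zero.mp hfinal with h | h
    · exact absurd h hf
    · exact h
  have := congrArg (eval p) this
  simp [hξ, hη] at this

lemma Th_add_fn (v w : R2 →ₗ[ℂ] ℂ) (F : W) : Th (v + w) F = Th v F + Th w F := by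
  induction F using TensorProduct.induction_on with
  | zero => simp
  | tmul a b => simp [add_smul]
  | add x y hx hy => simp [hx, hy]; ring

/-- descend a functional killing `I` to the quotient -/
def descQ (I : Ideal R2) (v : R2 →ₗ[ℂ] ℂ) (hv : ∀ z ∈ I, v z = 0) :
    (R2 ⧸ I) →ₗ[ℂ] ℂ :=
  (Submodule.liftQ ((I : Submodule R2 R2).restrictScalars ℂ) v
      (fun z hz => by simpa using hv z hz)) ∘ₗ
    (Submodule.Quotient.restrictScalarsEquiv ℂ (I : Submodule R2 R2)).symm.toLinearMap

@[simp] lemma descQ_mk (I : Ideal R2) (v : R2 →ₗ[ℂ] ℂ) (hv : ∀ z ∈ I, v z = 0) (z : R2) :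
    descQ I v hv (Ideal.Quotient.mk I z) = v z := by
  have h1 : (Ideal.Quotient.mk I z : R2 ⧸ I) = Submodule.Quotient.mk z := rfl
  rw [descQ, LinearMap.comp_apply, h1, LinearEquiv.coe_toLinearMap,
    Submodule.Quotient.restrictScalarsEquiv_symm_mk, Submodule.liftQ_apply]

theorem core (u : R2 →ₗ[ℂ] ℂ) (N : ℕ)
    (hN : ∀ z ∈ (Ideal.span {X 0, X 1} : Ideal R2) ^ N, u z = 0)
    (f g : R2) (hf0 : f ≠ 0) (hg0 : g ≠ 0) (hrp : IsRelPrime f g)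
    (hfu : ∀ r, u (r * f) = 0) (hgu : ∀ r, u (r * g) = 0) (i : Fin 2) :
    u (X i * Jc f g) = 0 := by
  classical
  have hN1 : ∀ z ∈ (Ideal.span {X 0, X 1} : Ideal R2) ^ (N + 1), u z = 0 := fun z hz =>
    hN z (Ideal.pow_le_pow_right (Nat.le_succ N) hz)
  set I : Ideal R2 := Ideal.span {f, g} with hIdef
  have hfI : f ∈ I := Ideal.subset_span (by simp)
  have hgI : g ∈ I := Ideal.subset_span (by simp)
  have huI : ∀ (r z : R2), z ∈ I → u (r * z) = 0 := by
    intro r z hz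
    obtain ⟨a, b, hab⟩ := Ideal.mem_span_pair.mp hz
    rw [← hab, show r * (a * f + b * g) = (r * a) * f + (r * b) * g by ring,
      map_add, hfu, hgu, add_zero]
  have huI0 : ∀ z ∈ I, u z = 0 := fun z hz => by simpa using huI 1 z hz
  obtain ⟨af, bf, hfdd, hfdx, hfdy⟩ := dd_exists f
  obtain ⟨ag, bg, hgdd, hgdx, hgdy⟩ := dd_exists g
  set Δ : W := af * bg - bf * ag with hΔdef
  have hdgΔ : dg Δ = Jc f g := by
    rw [hΔdef, map_sub, map_mul, map_mul, hfdx, hfdy, hgdx, hgdy, Jc]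
  -- the commutation property
  have kp1 : ∀ (v : R2 →ₗ[ℂ] ℂ), (∀ z ∈ I, v z = 0) → ∀ r : R2,
      Ideal.Quotient.mk I (Th (v ∘ₗ LinearMap.mulLeft ℂ r) Δ) =
        Ideal.Quotient.mk I (r * Th v Δ) := by
    intro v hv r
    obtain ⟨a, b, hr, _, _⟩ := dd_exists r
    have hkill1 : ∀ (χ : R2), χ ∈ I → ∀ G : W,
        Ideal.Quotient.mk I (Th v (G * e1 χ)) = 0 := by
      intro χ hχ G
      rw [mul_comm, Th_e1_mul, Ideal.Quotient.eq_zero_iff_mem]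
      exact I.mul_mem_right _ hχ
    have hkill2 : ∀ (χ : R2), χ ∈ I → ∀ G : W, Th v (G * e2 χ) = 0 := by
      intro χ hχ G
      rw [mul_comm, Th_e2_mul,
        show v ∘ₗ LinearMap.mulLeft ℂ χ = 0 from
          LinearMap.ext fun z => hv (χ * z) (I.mul_mem_right _ hχ), Th_zero_fn]
    have hId : (e1 r - e2 r) * Δ =
        (a * bg - b * ag) * (e1 f - e2 f) + (b * af - a * bf) * (e1 g - e2 g) := by
      rw [hr, hΔdef, hfdd, hgdd]; ring
    have hId2 : e2 r * Δ = e1 r * Δ -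
        (((a * bg - b * ag) * e1 f - (a * bg - b * ag) * e2 f) +
          ((b * af - a * bf) * e1 g - (b * af - a * bf) * e2 g)) := by
      rw [show e2 r * Δ = e1 r * Δ - (e1 r - e2 r) * Δ by ring, hId]; ring
    have step : Th (v ∘ₗ LinearMap.mulLeft ℂ r) Δ = Th v (e2 r * Δ) := (Th_e2_mul v r Δ).symm
    rw [step, hId2]
    simp only [map_sub, map_add]
    rw [Th_e1_mul, hkill2 f hfI, hkill2 g hgI, hkill1 f hfI, hkill1 g hgI]
    simp
  -- the ideal of values of θ
  let SS : Set (R2 ⧸ I) := {x | ∃ v : R2 →ₗ[ℂ] ℂ,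
    (∀ z ∈ I, v z = 0) ∧ Ideal.Quotient.mk I (Th v Δ) = x}
  let 𝔞 : Ideal (R2 ⧸ I) :=
    { carrier := SS
      zero_mem' := ⟨0, fun z _ => LinearMap.zero_apply z, by rw [Th_zero_fn, map_zero]⟩
      add_mem' := by
        rintro x y ⟨v, hv, hx⟩ ⟨w, hw, hy⟩
        exact ⟨v + w, fun z hz => by simp [hv z hz, hw z hz],
          by rw [Th_add_fn, map_add, hx, hy]⟩
      smul_mem' := by
        rintro c x ⟨v, hv, hx⟩
        obtain ⟨r, rfl⟩ := Ideal.Quotient.mk_surjective c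
        refine ⟨v ∘ₗ LinearMap.mulLeft ℂ r, fun z hz => hv (r * z) (I.mul_mem_left r hz), ?_⟩
        rw [kp1 v hv r, ← hx, smul_eq_mul, map_mul] }
  have hone : (1 : R2 ⧸ I) ∈ 𝔞 := by
    by_contra h1
    obtain ⟨M, hMmax, hM⟩ := Ideal.exists_le_maximal 𝔞 ((Ideal.ne_top_iff_one 𝔞).mpr h1)
    set M' : Ideal R2 := M.comap (Ideal.Quotient.mk I) with hM'def
    have hM'max : M'.IsMaximal :=
      Ideal.comap_isMaximal_of_surjective _ Ideal.Quotient.mk_surjective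
    obtain ⟨p, hp⟩ := (MvPolynomial.isMaximal_iff_eq_vanishingIdeal_singleton (I := M')).mp hM'max
    have hIM' : ∀ z ∈ I, z ∈ M' := fun z hz => by
      show Ideal.Quotient.mk I z ∈ M
      rw [Ideal.Quotient.eq_zero_iff_mem.mpr hz]
      exact M.zero_mem
    have hevalI : ∀ z ∈ I, eval p z = 0 := fun z hz => by
      have h2 := hIM' z hz
      rw [hp] at h2
      exact (MvPolynomial.mem_vanishingIdeal_singleton_iff p z).mp h2
    have hpf : eval p f = 0 := hevalI f hfI
    have hpg : eval p g = 0 := hevalI g hgI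
    have hphie1 : ∀ χ : R2, phi p (e1 χ) = C (eval p χ) := by
      intro χ
      rw [show e1 χ = χ ⊗ₜ[ℂ] (1:R2) from rfl, phi_tmul, mul_one]
    have hphie2 : ∀ χ : R2, phi p (e2 χ) = χ := by
      intro χ
      rw [show e2 χ = (1:R2) ⊗ₜ[ℂ] χ from rfl, phi_tmul]
      simp
    have hΔpI : phi p Δ ∈ I := by
      by_contra hnot
      have hne : Ideal.Quotient.mk I (phi p Δ) ≠ 0 := fun h0 =>
        hnot (Ideal.Quotient.eq_zero_iff_mem.mp h0)
      obtain ⟨lam, hlam⟩ : ∃ lam : Module.Dual ℂ (R2 ⧸ I),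
          lam (Ideal.Quotient.mk I (phi p Δ)) ≠ 0 := by
        by_contra hall
        push_neg at hall
        exact hne ((Module.forall_dual_apply_eq_zero_iff ℂ _).mp hall)
      set v : R2 →ₗ[ℂ] ℂ := lam ∘ₗ (Ideal.Quotient.mkₐ ℂ I).toLinearMap with hvdef
      have hvmk : ∀ z : R2, v z = lam (Ideal.Quotient.mk I z) := fun z => rfl
      have hvI : ∀ z ∈ I, v z = 0 := fun z hz => by
        rw [hvmk, Ideal.Quotient.eq_zero_iff_mem.mpr hz, map_zero]
      have h2 : Th v Δ ∈ M' := hM ⟨v, hvI, rfl⟩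
      have h3 : eval p (Th v Δ) = 0 := by
        rw [hp] at h2
        exact (MvPolynomial.mem_vanishingIdeal_singleton_iff p _).mp h2
      rw [eval_Th, hvmk] at h3
      exact hlam h3
    have hfd : f = (X 0 - C (p 0)) * phi p af + (X 1 - C (p 1)) * phi p bf := by
      have h4 := congrArg (phi p) hfdd
      rw [map_sub, map_add, map_mul, map_mul, map_sub, map_sub, hphie1, hphie2,
        hphie1, hphie2, hphie1, hphie2, hpf, map_zero, eval_X, eval_X] at h4
      linear_combination -h4
    have hgd : g = (X 0 - C (p 0)) * phi p ag + (X 1 - C (p 1)) * phi p bg := by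
      have h4 := congrArg (phi p) hgdd
      rw [map_sub, map_add, map_mul, map_mul, map_sub, map_sub, hphie1, hphie2,
        hphie1, hphie2, hphie1, hphie2, hpg, map_zero, eval_X, eval_X] at h4
      linear_combination -h4
    have hΔpd : phi p Δ = phi p af * phi p bg - phi p bf * phi p ag := by
      rw [hΔdef, map_sub, map_mul, map_mul]
    exact wiebe hf0 hg0 hrp hfd hgd (by rw [← hΔpd]; exact hΔpI)
  obtain ⟨τv, hτI, hτ1⟩ := hone
  obtain ⟨SF, hSF⟩ := TensorProduct.exists_finset Δ
  have expand : ∀ r : R2, Ideal.Quotient.mk I r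
      = ∑ x ∈ SF, τv (r * x.2) • Ideal.Quotient.mk I x.1 := by
    intro r
    have h1 : Ideal.Quotient.mk I r = Ideal.Quotient.mk I (Th (τv ∘ₗ LinearMap.mulLeft ℂ r) Δ) := by
      rw [kp1 τv hτI r, map_mul, hτ1, mul_one]
    rw [h1, hSF, map_sum]
    have h2 : ∀ x : R2 × R2, Th (τv ∘ₗ LinearMap.mulLeft ℂ r) (x.1 ⊗ₜ[ℂ] x.2)
        = τv (r * x.2) • x.1 := fun x => by rw [Th_tmul]; rfl
    rw [show (∑ x ∈ SF, Th (τv ∘ₗ LinearMap.mulLeft ℂ r) (x.1 ⊗ₜ[ℂ] x.2))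
      = ∑ x ∈ SF, τv (r * x.2) • x.1 from Finset.sum_congr rfl fun x _ => h2 x]
    rw [map_sum]
    refine Finset.sum_congr rfl fun x _ => ?_
    exact map_smul (Ideal.Quotient.mkₐ ℂ I).toLinearMap _ _
  have hfinB : Module.Finite ℂ (R2 ⧸ I) := by
    rw [Module.finite_def]
    refine ⟨SF.image (fun x => Ideal.Quotient.mk I x.1), ?_⟩
    rw [eq_top_iff]
    rintro b -
    obtain ⟨r, rfl⟩ := Ideal.Quotient.mk_surjective b
    rw [expand r]
    exact Submodule.sum_mem _ fun x hx => Submodule.smul_mem _ _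
      (Submodule.subset_span (Finset.mem_image_of_mem _ hx))
  haveI := hfinB
  set τb : (R2 ⧸ I) →ₗ[ℂ] ℂ := descQ I τv hτI with hτbdef
  have hτb : ∀ z : R2, τb (Ideal.Quotient.mk I z) = τv z := fun z => descQ_mk I τv hτI z
  -- trace formula
  have traceform : ∀ c : R2,
      LinearMap.trace ℂ (R2 ⧸ I) (LinearMap.mulLeft ℂ (Ideal.Quotient.mk I c))
        = τv (c * Jc f g) := by
    intro c
    have hdgS : Jc f g = ∑ x ∈ SF, x.1 * x.2 := by
      rw [← hdgΔ, hSF, map_sum]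
      exact Finset.sum_congr rfl fun x _ => dg_tmul x.1 x.2
    let ι := {x // x ∈ SF}
    let pm : (ι → ℂ) →ₗ[ℂ] (R2 ⧸ I) :=
      ∑ m : ι, (LinearMap.proj m).smulRight (Ideal.Quotient.mk I m.1.1)
    let sm : (R2 ⧸ I) →ₗ[ℂ] (ι → ℂ) :=
      LinearMap.pi fun m => τb ∘ₗ LinearMap.mulLeft ℂ (Ideal.Quotient.mk I m.1.2)
    have hpm : ∀ w : ι → ℂ, pm w = ∑ m : ι, w m • Ideal.Quotient.mk I m.1.1 := by
      intro w
      simp [pm, LinearMap.sum_apply]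
    have hsm : ∀ b (m : ι), sm b m = τb (Ideal.Quotient.mk I m.1.2 * b) := fun b m => rfl
    have hps : ∀ b, pm (sm b) = b := by
      intro b
      obtain ⟨r, rfl⟩ := Ideal.Quotient.mk_surjective b
      rw [hpm]
      rw [Finset.sum_congr rfl (fun (m : ι) _ => by
        rw [hsm, ← map_mul, hτb, mul_comm (↑m : R2 × R2).2 r] :
        ∀ m ∈ (Finset.univ : Finset ι), sm (Ideal.Quotient.mk I r) m • Ideal.Quotient.mk I m.1.1
          = τv (r * m.1.2) • Ideal.Quotient.mk I m.1.1)]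
      rw [Finset.sum_coe_sort SF (fun x => τv (r * x.2) • Ideal.Quotient.mk I x.1)]
      exact (expand r).symm
    have hid : pm ∘ₗ sm = LinearMap.id := LinearMap.ext hps
    have htr : LinearMap.trace ℂ (R2 ⧸ I) (LinearMap.mulLeft ℂ (Ideal.Quotient.mk I c)) =
        LinearMap.trace ℂ (ι → ℂ) (sm ∘ₗ (LinearMap.mulLeft ℂ (Ideal.Quotient.mk I c) ∘ₗ pm)) := by
      have h0 : (LinearMap.mulLeft ℂ (Ideal.Quotient.mk I c) ∘ₗ pm) ∘ₗ sm
          = LinearMap.mulLeft ℂ (Ideal.Quotient.mk I c) := by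
        rw [LinearMap.comp_assoc, hid, LinearMap.comp_id]
      conv_lhs => rw [← h0]
      exact LinearMap.trace_comp_comm' sm (LinearMap.mulLeft ℂ (Ideal.Quotient.mk I c) ∘ₗ pm)
    have htr2 : LinearMap.trace ℂ (ι → ℂ)
        (sm ∘ₗ (LinearMap.mulLeft ℂ (Ideal.Quotient.mk I c) ∘ₗ pm))
          = ∑ m : ι, τv (c * ((↑m : R2 × R2).1 * (↑m : R2 × R2).2)) := by
      rw [LinearMap.trace_eq_matrix_trace ℂ (Pi.basisFun ℂ ι), Matrix.trace]
      have hentry : ∀ m : ι, (LinearMap.toMatrix (Pi.basisFun ℂ ι) (Pi.basisFun ℂ ι)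
          (sm ∘ₗ (LinearMap.mulLeft ℂ (Ideal.Quotient.mk I c) ∘ₗ pm))).diag m
            = τv (c * ((↑m : R2 × R2).1 * (↑m : R2 × R2).2)) := by
        intro m
        rw [Matrix.diag]
        rw [LinearMap.toMatrix_apply]
        rw [Pi.basisFun_repr, Pi.basisFun_apply]
        rw [LinearMap.comp_apply, LinearMap.comp_apply]
        have hpm1 : pm (Pi.single m 1) = Ideal.Quotient.mk I (↑m : R2 × R2).1 := by
          rw [hpm]
          rw [Finset.sum_eq_single m]
          · rw [Pi.single_eq_same, one_smul]
          · intro n _ hne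
            rw [Pi.single_eq_of_ne hne, zero_smul]
          · intro hm
            exact absurd (Finset.mem_univ m) hm
        rw [hpm1, hsm]
        rw [LinearMap.mulLeft_apply, ← map_mul, ← map_mul, hτb]
        congr 1
        ring
      exact Finset.sum_congr rfl fun m _ => hentry m
    rw [htr, htr2, ← map_sum]
    congr 1
    rw [hdgS, Finset.mul_sum]
    rw [← Finset.sum_coe_sort SF (fun x => c * (x.1 * x.2))]
  -- representation of functionals
  let Ψ : (R2 ⧸ I) →ₗ[ℂ] Module.Dual ℂ (R2 ⧸ I) :=
    { toFun := fun b => τb ∘ₗ LinearMap.mulLeft ℂ b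
      map_add' := fun b c => by
        apply LinearMap.ext; intro z
        simp [LinearMap.mulLeft_apply, add_mul]
      map_smul' := fun m b => by
        apply LinearMap.ext; intro z
        simp [LinearMap.mulLeft_apply, smul_mul_assoc] }
  have hΨapp : ∀ (b z : R2 ⧸ I), Ψ b z = τb (b * z) := fun b z => rfl
  have hΨinj : Function.Injective Ψ := by
    rw [injective_iff_map_eq_zero]
    intro b hb
    obtain ⟨r, rfl⟩ := Ideal.Quotient.mk_surjective b
    rw [expand r]
    have hz : ∀ x : R2 × R2, x ∈ SF → τv (r * x.2) = 0 := by
      intro x _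
      have h5 : Ψ (Ideal.Quotient.mk I r) (Ideal.Quotient.mk I x.2) = 0 := by rw [hb]; rfl
      rw [hΨapp, ← map_mul, hτb] at h5
      exact h5
    rw [Finset.sum_congr rfl fun x hx => by rw [hz x hx, zero_smul]]
    simp
  have hΨsurj : Function.Surjective Ψ := by
    have h1 : Module.finrank ℂ (Module.Dual ℂ (R2 ⧸ I)) = Module.finrank ℂ (R2 ⧸ I) :=
      Subspace.dual_finrank_eq
    intro lam
    have h2 := LinearMap.finrank_range_add_finrank_ker Ψ
    have h3 : Module.finrank ℂ (LinearMap.ker Ψ) = 0 := by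
      rw [LinearMap.ker_eq_bot.mpr hΨinj]; exact finrank_bot ℂ _
    have h4 : Module.finrank ℂ (LinearMap.range Ψ)
        = Module.finrank ℂ (Module.Dual ℂ (R2 ⧸ I)) := by omega
    have h5 : LinearMap.range Ψ = ⊤ := Submodule.eq_top_of_finrank_eq h4
    exact LinearMap.range_eq_top.mp h5 lam
  obtain ⟨bu, hbu⟩ := hΨsurj (descQ I u huI0)
  obtain ⟨ru, hru⟩ := Ideal.Quotient.mk_surjective bu
  have hXi : (X i : R2) ∈ (Ideal.span {X 0, X 1} : Ideal R2) := by
    fin_cases i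
    · exact Ideal.subset_span (by simp)
    · exact Ideal.subset_span (by simp)
  have hxNbu : Ideal.Quotient.mk I (X i ^ (N + 1)) * bu = 0 := by
    apply hΨinj
    rw [map_zero]
    apply LinearMap.ext
    intro z
    obtain ⟨w, rfl⟩ := Ideal.Quotient.mk_surjective z
    rw [hΨapp]
    have h6 : Ideal.Quotient.mk I (X i ^ (N + 1)) * bu * Ideal.Quotient.mk I w
        = bu * Ideal.Quotient.mk I (X i ^ (N + 1) * w) := by
      rw [map_mul]; ring
    rw [h6, ← hΨapp, hbu, descQ_mk]
    have h7 : X i ^ (N + 1) * w ∈ (Ideal.span {X 0, X 1} : Ideal R2) ^ (N + 1) :=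
      Ideal.mul_mem_right w _ (Ideal.pow_mem_pow hXi (N + 1))
    rw [hN1 _ h7]
    rfl
  have hval : u (X i * Jc f g) = τv ((ru * X i) * Jc f g) := by
    have h8 : u (X i * Jc f g) = descQ I u huI0 (Ideal.Quotient.mk I (X i * Jc f g)) :=
      (descQ_mk I u huI0 _).symm
    rw [h8, ← hbu, hΨapp, ← hru, ← map_mul, hτb]
    congr 1
    ring
  rw [hval, ← traceform (ru * X i)]
  have hnil : IsNilpotent (LinearMap.mulLeft ℂ (Ideal.Quotient.mk I (ru * X i))) := by
    refine ⟨N + 2, ?_⟩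
    rw [LinearMap.pow_mulLeft]
    have h9 : (Ideal.Quotient.mk I (ru * X i)) ^ (N + 2) = 0 := by
      have h10 : Ideal.Quotient.mk I (ru * X i) = bu * Ideal.Quotient.mk I (X i) := by
        rw [map_mul, hru]
      rw [h10, mul_pow]
      have h11 : bu ^ (N + 2) * Ideal.Quotient.mk I (X i) ^ (N + 2)
          = (bu ^ (N + 1) * Ideal.Quotient.mk I (X i))
            * (Ideal.Quotient.mk I (X i ^ (N + 1)) * bu) := by
        rw [map_pow]; ring
      rw [h11, hxNbu, mul_zero]
    rw [h9]
    exact LinearMap.mulLeft_zero_eq_zero _ _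
  have h12 := LinearMap.isNilpotent_trace_of_isNilpotent hnil
  exact h12.eq_zero

lemma separation (K : Ideal R2) (z : R2) (hz : z ∉ K) :
    ∃ u : R2 →ₗ[ℂ] ℂ, (∀ w ∈ K, u w = 0) ∧ u z ≠ 0 := by
  have hne : Ideal.Quotient.mk K z ≠ 0 := fun h0 => hz (Ideal.Quotient.eq_zero_iff_mem.mp h0)
  obtain ⟨lam, hlam⟩ : ∃ lam : Module.Dual ℂ (R2 ⧸ K), lam (Ideal.Quotient.mk K z) ≠ 0 := by
    by_contra hall
    push_neg at hall
    exact hne ((Module.forall_dual_apply_eq_zero_iff ℂ _).mp hall)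
  refine ⟨lam ∘ₗ (Ideal.Quotient.mkₐ ℂ K).toLinearMap, fun w hw => ?_, hlam⟩
  show lam (Ideal.Quotient.mk K w) = 0
  rw [Ideal.Quotient.eq_zero_iff_mem.mpr hw, map_zero]

lemma exists_relprime_factor {f g : R2} (hf : f ≠ 0) (hg : g ≠ 0) :
    ∃ h f₀ g₀ : R2, f = h * f₀ ∧ g = h * g₀ ∧ f₀ ≠ 0 ∧ g₀ ≠ 0 ∧ IsRelPrime f₀ g₀ := by
  classical
  letI : StrongNormalizationMonoid R2 := UniqueFactorizationMonoid.normalizationMonoid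
  letI : NormalizedGCDMonoid R2 := UniqueFactorizationMonoid.toNormalizedGCDMonoid R2
  set d := gcd f g with hddef
  have hd0 : d ≠ 0 := fun h0 => hf ((gcd_eq_zero_iff f g).mp h0).1
  obtain ⟨f₀, hf₀⟩ := gcd_dvd_left f g
  obtain ⟨g₀, hg₀⟩ := gcd_dvd_right f g
  rw [← hddef] at hf₀ hg₀
  refine ⟨d, f₀, g₀, hf₀, hg₀, ?_, ?_, ?_⟩
  · rintro rfl
    rw [mul_zero] at hf₀
    exact hf hf₀
  · rintro rfl
    rw [mul_zero] at hg₀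
    exact hg hg₀
  · intro e hef heg
    obtain ⟨w1, hw1⟩ := hef
    obtain ⟨w2, hw2⟩ := heg
    have h1 : d * e ∣ f := ⟨w1, by rw [hf₀, hw1]; ring⟩
    have h2 : d * e ∣ g := ⟨w2, by rw [hg₀, hw2]; ring⟩
    obtain ⟨w, hw⟩ := dvd_gcd h1 h2
    rw [← hddef] at hw
    have h3 : d * 1 = d * (e * w) := by
      rw [mul_one]
      conv_lhs => rw [hw]
      ring
    exact IsUnit.of_mul_eq_one w (mul_left_cancel₀ hd0 h3).symm

theorem socle (K : Ideal R2) (n : ℕ)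
    (hKm : (Ideal.span {X 0, X 1} : Ideal R2) ^ n ≤ K)
    (f g : R2) (hf : f ∈ K) (hg : g ∈ K) (i : Fin 2) : X i * Jc f g ∈ K := by
  by_contra hmem
  obtain ⟨u, huK, hune⟩ := separation K _ hmem
  rcases eq_or_ne f 0 with rfl | hf0
  · exact hune (by rw [show Jc 0 g = 0 by simp [Jc], mul_zero, map_zero])
  rcases eq_or_ne g 0 with rfl | hg0
  · exact hune (by rw [show Jc f 0 = 0 by simp [Jc], mul_zero, map_zero])
  obtain ⟨h, f₀, g₀, hf₀, hg₀, hf00, hg00, hrp⟩ := exists_relprime_factor hf0 hg0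
  set u' : R2 →ₗ[ℂ] ℂ := u ∘ₗ LinearMap.mulLeft ℂ (h * h) with hu'def
  have hu'app : ∀ z, u' z = u (h * h * z) := fun z => rfl
  have hcore : u' (X i * Jc f₀ g₀) = 0 := by
    refine core u' n ?_ f₀ g₀ hf00 hg00 hrp ?_ ?_ i
    · intro z hz
      rw [hu'app]
      exact huK _ (K.mul_mem_left (h * h) (hKm hz))
    · intro r
      rw [hu'app, show h * h * (r * f₀) = (h * r) * (h * f₀) by ring, ← hf₀]
      exact huK _ (K.mul_mem_left (h * r) hf)
    · intro r
      rw [hu'app, show h * h * (r * g₀) = (h * r) * (h * g₀) by ring, ← hg₀]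
      exact huK _ (K.mul_mem_left (h * r) hg)
  have hjac : X i * Jc f g = (h * h) * (X i * Jc f₀ g₀)
      + (X i * Jc f₀ h) * g + (X i * Jc h g₀) * f := by
    rw [hf₀, hg₀, Jc, Jc, Jc, Jc]
    simp only [map_mul, pderiv_mul]
    ring
  apply hune
  rw [hjac, map_add, map_add]
  rw [show u (h * h * (X i * Jc f₀ g₀)) = u' (X i * Jc f₀ g₀) from rfl, hcore]
  rw [huK _ (K.mul_mem_left _ hg), huK _ (K.mul_mem_left _ hf)]
  simp

lemma sub_const_mem (r : R2) :
    r - C (constantCoeff r) ∈ (Ideal.span {X 0, X 1} : Ideal R2) := by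
  induction r using MvPolynomial.induction_on with
  | C c => simp
  | add p q hp hq =>
      rw [map_add, map_add, show p + q - (C (constantCoeff p) + C (constantCoeff q))
        = (p - C (constantCoeff p)) + (q - C (constantCoeff q)) by ring]
      exact Ideal.add_mem _ hp hq
  | mul_X p i hp =>
      rw [map_mul, constantCoeff_X, mul_zero, map_zero, sub_zero]
      exact Ideal.mul_mem_left _ p (Ideal.subset_span (by fin_cases i <;> simp))

lemma finite_quotient (K : Ideal R2) (n : ℕ)
    (hKm : (Ideal.span {X 0, X 1} : Ideal R2) ^ n ≤ K) :
    Module.Finite ℂ (R2 ⧸ K) := by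
  classical
  haveI : DecidableEq (R2 ⧸ K) := Classical.decEq _
  rw [Module.finite_def]
  let sfin : Finset (R2 ⧸ K) := (Finset.range n ×ˢ Finset.range n).image
    (fun ij : ℕ × ℕ => Ideal.Quotient.mk K (X 0 ^ ij.1 * X 1 ^ ij.2))
  refine ⟨sfin, ?_⟩
  rw [eq_top_iff]
  rintro b -
  obtain ⟨z, rfl⟩ := Ideal.Quotient.mk_surjective b
  rw [← MvPolynomial.support_sum_monomial_coeff z, map_sum]
  apply Submodule.sum_mem
  intro m _
  have hmon : (monomial m (coeff m z) : R2) = (coeff m z) • (X 0 ^ m 0 * X 1 ^ m 1) := by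
    rw [smul_eq_C_mul, monomial_eq]
    congr 1
    rw [Finsupp.prod_pow, Fin.prod_univ_two]
  by_cases hdeg : m 0 + m 1 < n
  · rw [hmon, show Ideal.Quotient.mk K ((coeff m z) • (X 0 ^ m 0 * X 1 ^ m 1))
        = (coeff m z) • Ideal.Quotient.mk K (X 0 ^ m 0 * X 1 ^ m 1) from
      map_smul (Ideal.Quotient.mkₐ ℂ K).toLinearMap _ _]
    refine Submodule.smul_mem _ _ (Submodule.subset_span ?_)
    have hmem2 : ((m 0, m 1) : ℕ × ℕ) ∈ Finset.range n ×ˢ Finset.range n := by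
      rw [Finset.mem_product, Finset.mem_range, Finset.mem_range]
      exact ⟨by omega, by omega⟩
    have hmem3 := Finset.mem_image_of_mem
      (fun ij : ℕ × ℕ => Ideal.Quotient.mk K (X 0 ^ ij.1 * X 1 ^ ij.2)) hmem2
    exact Finset.mem_coe.mpr hmem3
  · have hXmem : (X 0 ^ m 0 * X 1 ^ m 1 : R2)
        ∈ (Ideal.span {X 0, X 1} : Ideal R2) ^ (m 0 + m 1) := by
      rw [pow_add]
      exact Ideal.mul_mem_mul (Ideal.pow_mem_pow (Ideal.subset_span (by simp)) _)
        (Ideal.pow_mem_pow (Ideal.subset_span (by simp)) _)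
    have h2 : (monomial m (coeff m z) : R2) ∈ K := by
      rw [hmon, smul_eq_C_mul]
      have h5 : (Ideal.span {X 0, X 1} : Ideal R2) ^ (m 0 + m 1)
          ≤ (Ideal.span {X 0, X 1} : Ideal R2) ^ n := Ideal.pow_le_pow_right (by omega)
      exact hKm (h5 (Ideal.mul_mem_left _ _ hXmem))
    rw [Ideal.Quotient.eq_zero_iff_mem.mpr h2]
    exact Submodule.zero_mem _

end JacSocle


open JacSocle in
/-- Let `R = ℂ[x, y]` and let `K` be an ideal whose radical is the maximal
ideal `(x, y)` at the origin. -/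
theorem mult_le_mult_jacobian_add_one'
    (K : Ideal (MvPolynomial (Fin 2) ℂ))
    (hK : K.radical = Ideal.span {X 0, X 1})
    (f g : MvPolynomial (Fin 2) ℂ) (hf : f ∈ K) (hg : g ∈ K) :
    Module.finrank ℂ (MvPolynomial (Fin 2) ℂ ⧸ K) ≤
      Module.finrank ℂ (MvPolynomial (Fin 2) ℂ ⧸
        (K ⊔ Ideal.span {pderiv 0 f * pderiv 1 g - pderiv 1 f * pderiv 0 g})) + 1 := by
  classical
  set J : MvPolynomial (Fin 2) ℂ := pderiv 0 f * pderiv 1 g - pderiv 1 f * pderiv 0 g with hJdef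
  have hJc : J = JacSocle.Jc f g := rfl
  obtain ⟨n, hn⟩ := Ideal.exists_radical_pow_le_of_fg K (by
    rw [hK]
    exact ⟨{X 0, X 1}, by simp⟩)
  rw [hK] at hn
  have hsoc : ∀ i : Fin 2, X i * J ∈ K := fun i => hJc ▸ JacSocle.socle K n hn f g hf hg i
  haveI hfinK : Module.Finite ℂ (MvPolynomial (Fin 2) ℂ ⧸ K) := JacSocle.finite_quotient K n hn
  set K' : Ideal (MvPolynomial (Fin 2) ℂ) := K ⊔ Ideal.span {J} with hK'def
  have hKK' : K ≤ K' := le_sup_left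
  haveI hfinK' : Module.Finite ℂ (MvPolynomial (Fin 2) ℂ ⧸ K') :=
    JacSocle.finite_quotient K' n (le_trans hn hKK')
  let π : (MvPolynomial (Fin 2) ℂ ⧸ K) →ₗ[MvPolynomial (Fin 2) ℂ]
      (MvPolynomial (Fin 2) ℂ ⧸ K') :=
    Submodule.liftQ (K : Submodule (MvPolynomial (Fin 2) ℂ) (MvPolynomial (Fin 2) ℂ))
      (Submodule.mkQ (K' : Submodule (MvPolynomial (Fin 2) ℂ) (MvPolynomial (Fin 2) ℂ)))
      (by
        intro z hz
        rw [LinearMap.mem_ker, Submodule.mkQ_apply, Submodule.Quotient.mk_eq_zero]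
        exact hKK' hz)
  let πc : (MvPolynomial (Fin 2) ℂ ⧸ K) →ₗ[ℂ] (MvPolynomial (Fin 2) ℂ ⧸ K') :=
    π.restrictScalars ℂ
  have hrank := LinearMap.finrank_range_add_finrank_ker πc
  have hr1 : Module.finrank ℂ (LinearMap.range πc)
      ≤ Module.finrank ℂ (MvPolynomial (Fin 2) ℂ ⧸ K') := Submodule.finrank_le _
  have hker : LinearMap.ker πc ≤ Submodule.span ℂ {Ideal.Quotient.mk K J} := by
    intro x hx
    obtain ⟨z, rfl⟩ := Ideal.Quotient.mk_surjective x
    rw [LinearMap.mem_ker] at hx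
    have hz : z ∈ K' := by
      have h2 : πc (Ideal.Quotient.mk K z)
          = Submodule.Quotient.mk (p := (K' : Submodule (MvPolynomial (Fin 2) ℂ)
            (MvPolynomial (Fin 2) ℂ))) z := by
        show π (Ideal.Quotient.mk K z) = _
        exact Submodule.liftQ_apply _ _ z
      rw [h2] at hx
      exact (Submodule.Quotient.mk_eq_zero _).mp hx
    obtain ⟨k, hk, w, hw, hzkw⟩ := Submodule.mem_sup.mp hz
    obtain ⟨r, hr⟩ := Ideal.mem_span_singleton'.mp hw
    obtain ⟨a, b, hab⟩ := Ideal.mem_span_pair.mp (JacSocle.sub_const_mem r)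
    have hKmem : (r - C (constantCoeff r)) * J ∈ K := by
      rw [← hab, show (a * X 0 + b * X 1) * J = a * (X 0 * J) + b * (X 1 * J) by ring]
      exact K.add_mem (K.mul_mem_left a (hsoc 0)) (K.mul_mem_left b (hsoc 1))
    have hmkz : Ideal.Quotient.mk K z = constantCoeff r • Ideal.Quotient.mk K J := by
      have h3 : z = k + ((r - C (constantCoeff r)) * J + C (constantCoeff r) * J) := by
        rw [← hzkw, ← hr]; ring
      rw [h3, map_add, map_add, Ideal.Quotient.eq_zero_iff_mem.mpr hk,
        Ideal.Quotient.eq_zero_iff_mem.mpr hKmem, ← smul_eq_C_mul,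
        show Ideal.Quotient.mk K (constantCoeff r • J)
            = constantCoeff r • Ideal.Quotient.mk K J from
          map_smul (Ideal.Quotient.mkₐ ℂ K).toLinearMap _ _]
      simp
    rw [hmkz]
    exact Submodule.smul_mem _ _ (Submodule.mem_span_singleton_self _)
  have hr2 : Module.finrank ℂ (LinearMap.ker πc) ≤ 1 := by
    have h4 : Module.finrank ℂ (LinearMap.ker πc)
        ≤ Module.finrank ℂ (Submodule.span ℂ {Ideal.Quotient.mk K J}) :=
      Submodule.finrank_mono hker
    rcases eq_or_ne (Ideal.Quotient.mk K J) 0 with h0 | h0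
    · rw [h0, Submodule.span_zero_singleton] at h4
      have h6 : Module.finrank ℂ (⊥ : Submodule ℂ (MvPolynomial (Fin 2) ℂ ⧸ K)) = 0 :=
        finrank_bot ℂ _
      omega
    · rw [finrank_span_singleton h0] at h4
      exact h4
  omega

/-- Let `R = ℂ[x, y]` and let `K` be an ideal whose radical is the maximal
ideal `(x, y)` at the origin. For `f, g ∈ K` with Jacobian determinant
`J = f_x g_y − f_y g_x`, we have `dim_ℂ R⧸K ≤ dim_ℂ R⧸(K + (J)) + 1`. -/
theorem mult_le_mult_jacobian_add_one
    (K : Ideal (MvPolynomial (Fin 2) ℂ))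
    (hK : K.radical = Ideal.span {X 0, X 1})
    (f g : MvPolynomial (Fin 2) ℂ) (hf : f ∈ K) (hg : g ∈ K) :
    Module.finrank ℂ (MvPolynomial (Fin 2) ℂ ⧸ K) ≤
      Module.finrank ℂ (MvPolynomial (Fin 2) ℂ ⧸
        (K ⊔ Ideal.span {pderiv 0 f * pderiv 1 g - pderiv 1 f * pderiv 0 g})) + 1 :=
  mult_le_mult_jacobian_add_one' K hK f g hf hg
end
end
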